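/- arXiv:2003.06023 — 7 statements merged into one kernel-verified Lean document; each statement's English description precedes it below -/
import Mathlib

section
/- Under Assumptions 1 and 2, the marginal distribution of compliance types of unit i is identified: P[AT_i] = E[D_i | Z_i=0, Z_j=0]; P[SC_i] = E[D_i | Z_i=0, Z_j=1] − E[D_i | Z_i=0, Z_j=0]; P[C_i] = E[D_i | Z_i=1, Z_j=0] − E[D_i | Z_i=0, Z_j=1]; P[GC_i] = E[D_i | Z_i=1, Z_j=1] − E[D_i | Z_i=1, Z_j=0]; and P[NT_i] = 1 − P[AT_i] − P[SC_i] − P[C_i] − P[GC_i]. -/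
/-!
Independence of the instruments from the potential treatments means that conditioning on
`(Z_i, Z_j) = (z, z')` leaves the law of `D_i(z, z')` unchanged, while on that event the observed
treatment is `D_i(z, z')`; hence each cell mean `E[D_i | Z_i = z, Z_j = z']` equals
`P[D_i(z, z') = 1]`. Monotonicity makes the events `{D_i(z, z') = 1}` a.s. increasing along
`(0,0), (0,1), (1,0), (1,1)`, so each compliance type, being the difference of two consecutive
such events, has probability equal to the difference of consecutive cell means.
-/

open MeasureTheory ProbabilityTheory

noncomputable def bInd (b : Bool) : ℝ := if b then 1 else 0

lemma bInd_comp_eq_indicator {Ω : Type*} (f : Ω → Bool) :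
    (fun ω => bInd (f ω)) = {ω | f ω = true}.indicator 1 := by
  funext ω
  cases h : f ω <;> simp [bInd, h]

section

variable {Ω : Type*} [MeasurableSpace Ω] {μ : Measure Ω}

lemma integral_bInd {f : Ω → Bool} (hf : Measurable f) :
    ∫ ω, bInd (f ω) ∂μ = μ.real {ω | f ω = true} := by
  have hmeas : MeasurableSet {ω | f ω = true} := hf (measurableSet_singleton true)
  rw [bInd_comp_eq_indicator, integral_indicator_one hmeas]

lemma measureReal_setOf_and_eq_false_of_ae_le [IsFiniteMeasure μ] {f g : Ω → Bool}
    (hf : Measurable f) (hfg : f ≤ᵐ[μ] g) :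
    μ.real {ω | g ω = true ∧ f ω = false} =
      μ.real {ω | g ω = true} - μ.real {ω | f ω = true} := by
  have hsub : {ω | f ω = true} ≤ᵐ[μ] {ω | g ω = true} :=
    hfg.mono fun _ hle hω => Bool.le_iff_imp.mp hle hω
  have hdiff : {ω | g ω = true ∧ f ω = false} = {ω | g ω = true} \ {ω | f ω = true} := by
    ext ω
    simp
  have hmeas : MeasurableSet {ω | f ω = true} := hf (measurableSet_singleton true)
  rw [hdiff, measureReal_sdiff' hmeas,
    measureReal_congr (union_ae_eq_left_iff_ae_subset.mpr hsub)]

lemma probReal_setOf_eq_false [IsProbabilityMeasure μ] {f : Ω → Bool} (hf : Measurable f) :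
    μ.real {ω | f ω = false} = 1 - μ.real {ω | f ω = true} := by
  have hcompl : {ω | f ω = false} = {ω | f ω = true}ᶜ := by
    ext ω
    simp
  have hmeas : MeasurableSet {ω | f ω = true} := hf (measurableSet_singleton true)
  rw [hcompl, probReal_compl_eq_one_sub hmeas]

variable {α β : Type*} [MeasurableSpace α] [MeasurableSpace β]

lemma cond_preimage_of_indepFun [IsFiniteMeasure μ] {X : Ω → α} {Z : Ω → β}
    (hXZ : IndepFun X Z μ) (hZ : Measurable Z) {A : Set α} {B : Set β}
    (hA : MeasurableSet A) (hB : MeasurableSet B) (hμB : μ (Z ⁻¹' B) ≠ 0) :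
    μ[X ⁻¹' A | Z ⁻¹' B] = μ (X ⁻¹' A) := by
  rw [cond_apply (hZ hB), Set.inter_comm, hXZ.measure_inter_preimage_eq_mul A B hA hB,
    mul_comm, ENNReal.mul_inv_cancel_right hμB (measure_ne_top μ _)]

lemma integral_bInd_cond_eq_of_indepFun [IsFiniteMeasure μ] [MeasurableSingletonClass β]
    {D : β → Ω → Bool} {Z : Ω → β} {b : β} (hD : Measurable (D b)) (hZ : Measurable Z)
    (hind : IndepFun (D b) Z μ) (hb : μ (Z ⁻¹' {b}) ≠ 0) :
    ∫ ω, bInd (D (Z ω) ω) ∂μ[|Z ⁻¹' {b}] = μ.real {ω | D b ω = true} := by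
  calc ∫ ω, bInd (D (Z ω) ω) ∂μ[|Z ⁻¹' {b}]
      = ∫ ω, bInd (D b ω) ∂μ[|Z ⁻¹' {b}] :=
        integral_congr_ae <| (ae_cond_mem (hZ (measurableSet_singleton b))).mono
          fun ω (hω : Z ω = b) => congrArg (fun c => bInd (D c ω)) hω
    _ = (μ[|Z ⁻¹' {b}]).real {ω | D b ω = true} := integral_bInd hD
    _ = μ.real {ω | D b ω = true} :=
        congrArg ENNReal.toReal <| cond_preimage_of_indepFun hind hZ
          (measurableSet_singleton true) (measurableSet_singleton b) hb

end

theorem stmt_0_general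
    {Ω : Type*} [MeasurableSpace Ω] (P : Measure Ω) [IsProbabilityMeasure P]
    (Y : Bool → Bool → Ω → ℝ) (Di Dj : Bool → Bool → Ω → Bool)
    (Zi Zj : Ω → Bool)
    (hDimeas : ∀ z z', Measurable (Di z z'))
    (hZi : Measurable Zi) (hZj : Measurable Zj)
    (hpos : ∀ z z', 0 < P ({x | Zi x = z} ∩ {x | Zj x = z'}))
    (hIV : IndepFun
      (fun ω => ((fun d d' => Y d d' ω),
                 (fun z z' => Di z z' ω),
                 (fun z z' => Dj z z' ω)))
      (fun ω => (Zi ω, Zj ω)) P)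
    (hmono : ∀ᵐ ω ∂P,
      (Di false false ω ≤ Di false true ω ∧ Di false true ω ≤ Di true false ω ∧
        Di true false ω ≤ Di true true ω) ∧
      (Dj false false ω ≤ Dj false true ω ∧ Dj false true ω ≤ Dj true false ω ∧
        Dj true false ω ≤ Dj true true ω))
    :
    (P ({x | Di false false x = true})).toReal = (∫ ω, bInd (Di (Zi ω) (Zj ω) ω) ∂(P[|({x | Zi x = false} ∩ {x | Zj x = false})]))
    ∧ (P ({x | Di false true x = true ∧ Di false false x = false})).toReal = (∫ ω, bInd (Di (Zi ω) (Zj ω) ω) ∂(P[|({x | Zi x = false} ∩ {x | Zj x = true})])) - (∫ ω, bInd (Di (Zi ω) (Zj ω) ω) ∂(P[|({x | Zi x = false} ∩ {x | Zj x = false})]))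
    ∧ (P ({x | Di true false x = true ∧ Di false true x = false})).toReal = (∫ ω, bInd (Di (Zi ω) (Zj ω) ω) ∂(P[|({x | Zi x = true} ∩ {x | Zj x = false})])) - (∫ ω, bInd (Di (Zi ω) (Zj ω) ω) ∂(P[|({x | Zi x = false} ∩ {x | Zj x = true})]))
    ∧ (P ({x | Di true true x = true ∧ Di true false x = false})).toReal = (∫ ω, bInd (Di (Zi ω) (Zj ω) ω) ∂(P[|({x | Zi x = true} ∩ {x | Zj x = true})])) - (∫ ω, bInd (Di (Zi ω) (Zj ω) ω) ∂(P[|({x | Zi x = true} ∩ {x | Zj x = false})]))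
    ∧ (P ({x | Di true true x = false})).toReal = 1 - (P ({x | Di false false x = true})).toReal - (P ({x | Di false true x = true ∧ Di false false x = false})).toReal - (P ({x | Di true false x = true ∧ Di false true x = false})).toReal - (P ({x | Di true true x = true ∧ Di true false x = false})).toReal := by
  have hZ : Measurable fun ω => (Zi ω, Zj ω) := hZi.prodMk hZj
  have hcell : ∀ z z',
      {x | Zi x = z} ∩ {x | Zj x = z'} = (fun ω => (Zi ω, Zj ω)) ⁻¹' {(z, z')} := by
    intro z z'
    ext
    simp
  have identify : ∀ z z', ∫ ω, bInd (Di (Zi ω) (Zj ω) ω) ∂P[|{x | Zi x = z} ∩ {x | Zj x = z'}] =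
      P.real {ω | Di z z' ω = true} := by
    intro z z'
    have hind : IndepFun (Di z z') (fun ω => (Zi ω, Zj ω)) P :=
      hIV.comp (φ := fun t : (Bool → Bool → ℝ) × (Bool → Bool → Bool) × (Bool → Bool → Bool) =>
        t.2.1 z z') (by fun_prop) measurable_id
    rw [hcell]
    exact integral_bInd_cond_eq_of_indepFun (D := fun p => Di p.1 p.2) (hDimeas z z') hZ hind
      (hcell z z' ▸ (hpos z z').ne')
  have type_prob := fun {a a' b b'} (h : ∀ᵐ ω ∂P, Di a a' ω ≤ Di b b' ω) =>
    measureReal_setOf_and_eq_false_of_ae_le (hDimeas a a') h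
  have hSC := type_prob (hmono.mono fun _ h => h.1.1)
  have hC := type_prob (hmono.mono fun _ h => h.1.2.1)
  have hGC := type_prob (hmono.mono fun _ h => h.1.2.2)
  simp only [← measureReal_def]
  refine ⟨(identify false false).symm, ?_, ?_, ?_, ?_⟩
  · rw [identify, identify, hSC]
  · rw [identify, identify, hC]
  · rw [identify, identify, hGC]
  · rw [probReal_setOf_eq_false (hDimeas true true), hSC, hC, hGC]
    ring

theorem stmt_0
    {Ω : Type*} [MeasurableSpace Ω] (P : Measure Ω) [IsProbabilityMeasure P]
    (Y : Bool → Bool → Ω → ℝ) (Di Dj : Bool → Bool → Ω → Bool)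
    (Zi Zj : Ω → Bool)
    (hYmeas : ∀ d d', Measurable (Y d d'))
    (hYint : ∀ d d', Integrable (Y d d') P)
    (hDimeas : ∀ z z', Measurable (Di z z'))
    (hDjmeas : ∀ z z', Measurable (Dj z z'))
    (hZi : Measurable Zi) (hZj : Measurable Zj)
    (hpos : ∀ z z', 0 < P ({x | Zi x = z} ∩ {x | Zj x = z'}))
    (hIV : IndepFun
      (fun ω => ((fun d d' => Y d d' ω),
                 (fun z z' => Di z z' ω),
                 (fun z z' => Dj z z' ω)))
      (fun ω => (Zi ω, Zj ω)) P)
    (hmono : ∀ᵐ ω ∂P,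
      (Di false false ω ≤ Di false true ω ∧ Di false true ω ≤ Di true false ω ∧
        Di true false ω ≤ Di true true ω) ∧
      (Dj false false ω ≤ Dj false true ω ∧ Dj false true ω ≤ Dj true false ω ∧
        Dj true false ω ≤ Dj true true ω))
    :
    (P ({x | Di false false x = true})).toReal = (∫ ω, bInd (Di (Zi ω) (Zj ω) ω) ∂(P[|({x | Zi x = false} ∩ {x | Zj x = false})]))
    ∧ (P ({x | Di false true x = true ∧ Di false false x = false})).toReal = (∫ ω, bInd (Di (Zi ω) (Zj ω) ω) ∂(P[|({x | Zi x = false} ∩ {x | Zj x = true})])) - (∫ ω, bInd (Di (Zi ω) (Zj ω) ω) ∂(P[|({x | Zi x = false} ∩ {x | Zj x = false})]))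
    ∧ (P ({x | Di true false x = true ∧ Di false true x = false})).toReal = (∫ ω, bInd (Di (Zi ω) (Zj ω) ω) ∂(P[|({x | Zi x = true} ∩ {x | Zj x = false})])) - (∫ ω, bInd (Di (Zi ω) (Zj ω) ω) ∂(P[|({x | Zi x = false} ∩ {x | Zj x = true})]))
    ∧ (P ({x | Di true true x = true ∧ Di true false x = false})).toReal = (∫ ω, bInd (Di (Zi ω) (Zj ω) ω) ∂(P[|({x | Zi x = true} ∩ {x | Zj x = true})])) - (∫ ω, bInd (Di (Zi ω) (Zj ω) ω) ∂(P[|({x | Zi x = true} ∩ {x | Zj x = false})]))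
    ∧ (P ({x | Di true true x = false})).toReal = 1 - (P ({x | Di false false x = true})).toReal - (P ({x | Di false true x = true ∧ Di false false x = false})).toReal - (P ({x | Di true false x = true ∧ Di false true x = false})).toReal - (P ({x | Di true true x = true ∧ Di true false x = false})).toReal :=
  stmt_0_general P Y Di Dj Zi Zj hDimeas hZi hZj hpos hIV hmono
end

section
/- Direct intention-to-treat decomposition: under Assumptions 1 and 2, E[Y | Z_i=1, Z_j=0] − E[Y | Z_i=0, Z_j=0] = E[(Y(1,0)−Y(0,0)) · 1_{(C_i ∪ SC_i) ∩ (C_j ∪ GC_j ∪ NT_j)}] + E[(Y(1,1)−Y(0,0)) · 1_{(C_i ∪ SC_i) ∩ SC_j}] + E[(Y(1,1)−Y(0,1)) · 1_{(C_i ∪ SC_i) ∩ AT_j}] + E[(Y(0,1)−Y(0,0)) · 1_{(GC_i ∪ NT_i) ∩ SC_j}] + E[(Y(1,1)−Y(1,0)) · 1_{AT_i ∩ SC_j}], where 1_A denotes the indicator of the event A (so each summand equals the corresponding conditional mean of the potential-outcome difference times the probability of the type combination). -/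
open MeasureTheory ProbabilityTheory

/-! Independence of the instruments from the potential treatments and outcomes means that
conditioning on `(Z_i, Z_j) = (z, z')` does not change their law, so each conditional mean of `Y`
is the unconditional mean of `Y(D_i(z,z'), D_j(z',z))`. The intention-to-treat effect is then the
mean of `Y(D_i(1,0), D_j(0,1)) - Y(D_i(0,0), D_j(0,0))`. Under monotonicity the response pattern of
each unit is one of five increasing ones, one per compliance type, and the 25 combinations of types
identify this difference pointwise with the announced sum of indicator-weighted effects. -/

section Integration

variable {Ω E β : Type*} {mΩ : MeasurableSpace Ω} {P : Measure Ω} [NormedAddCommGroup E]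

lemma integrable_apply_comp_bool {f : Bool → Ω → E} (hf : ∀ b, Integrable (f b) P)
    {a : Ω → Bool} (ha : Measurable a) : Integrable (fun ω => f (a ω) ω) P := by
  classical
  have hpiece : (fun ω => f (a ω) ω) = {ω | a ω = true}.piecewise (f true) (f false) := by
    ext ω
    cases h : a ω <;> simp [Set.piecewise, h]
  rw [hpiece]
  exact .piecewise (ha (measurableSet_singleton true)) (hf true).integrableOn
    (hf false).integrableOn

lemma ProbabilityTheory.IndepFun.integral_cond_preimage [IsFiniteMeasure P] [MeasurableSpace β]
    {X : Ω → ℝ} {Z : Ω → β} (hXZ : IndepFun X Z P) (hX : Integrable X P) (hZ : Measurable Z)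
    {s : Set β} (hs : MeasurableSet s) (hPs : P (Z ⁻¹' s) ≠ 0) :
    ∫ ω, X ω ∂P[|Z ⁻¹' s] = ∫ ω, X ω ∂P := by
  have hZs : MeasurableSet (Z ⁻¹' s) := hZ hs
  have h1s : Measurable (s.indicator fun _ => (1 : ℝ)) := measurable_const.indicator hs
  have hsetIntegral : ∫ ω in Z ⁻¹' s, X ω ∂P = (∫ ω, X ω ∂P) * P.real (Z ⁻¹' s) :=
    calc ∫ ω in Z ⁻¹' s, X ω ∂P = ∫ ω, (X * (s.indicator (fun _ => (1 : ℝ)) ∘ Z)) ω ∂P := by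
          rw [← integral_indicator hZs]
          congr 1
          ext ω
          by_cases h : Z ω ∈ s <;> simp [h]
      _ = (∫ ω, X ω ∂P) * ∫ ω, (Z ⁻¹' s).indicator 1 ω ∂P :=
          (hXZ.comp measurable_id h1s).integral_mul_eq_mul_integral hX.aestronglyMeasurable
            (h1s.comp hZ).aestronglyMeasurable
      _ = (∫ ω, X ω ∂P) * P.real (Z ⁻¹' s) := by rw [integral_indicator_one hZs]
  have hPs' : P.real (Z ⁻¹' s) ≠ 0 := ENNReal.toReal_ne_zero.mpr ⟨hPs, measure_ne_top _ _⟩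
  rw [ProbabilityTheory.cond, integral_smul_measure, hsetIntegral, smul_eq_mul,
    ENNReal.toReal_inv, ← measureReal_def]
  field_simp

lemma MeasureTheory.Integrable.mul_indicator_one {f : Ω → ℝ} (hf : Integrable f P) {S : Set Ω}
    (hS : MeasurableSet S) : Integrable (fun ω => f ω * S.indicator (fun _ => (1 : ℝ)) ω) P :=
  (hf.indicator hS).congr (ae_of_all _ fun ω => by by_cases h : ω ∈ S <;> simp [h])

end Integration

section ComplianceTypes

variable {Ω : Type*} (D : Bool → Bool → Ω → Bool)

def alwaysTaker : Set Ω := {x | D false false x = true}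

def socialComplier : Set Ω := {x | D false true x = true ∧ D false false x = false}

def complier : Set Ω := {x | D true false x = true ∧ D false true x = false}

def groupComplier : Set Ω := {x | D true true x = true ∧ D true false x = false}

def neverTaker : Set Ω := {x | D true true x = false}

def MonotoneResponseAt (ω : Ω) : Prop :=
  D false false ω ≤ D false true ω ∧ D false true ω ≤ D true false ω ∧
    D true false ω ≤ D true true ω

variable {D}

lemma MonotoneResponseAt.response_cases {ω : Ω} (h : MonotoneResponseAt D ω) :
    (D false false ω = true ∧ D false true ω = true ∧ D true false ω = true ∧
      D true true ω = true) ∨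
    (D false false ω = false ∧ D false true ω = true ∧ D true false ω = true ∧
      D true true ω = true) ∨
    (D false false ω = false ∧ D false true ω = false ∧ D true false ω = true ∧
      D true true ω = true) ∨
    (D false false ω = false ∧ D false true ω = false ∧ D true false ω = false ∧
      D true true ω = true) ∨
    (D false false ω = false ∧ D false true ω = false ∧ D true false ω = false ∧
      D true true ω = false) := by
  obtain ⟨h₁, h₂, h₃⟩ := h
  revert h₁ h₂ h₃
  cases D false false ω <;> cases D false true ω <;> cases D true false ω <;>
    cases D true true ω <;> decide

variable [MeasurableSpace Ω]

lemma measurableSet_alwaysTaker (hD : ∀ z z', Measurable (D z z')) :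
    MeasurableSet (alwaysTaker D) :=
  hD _ _ (measurableSet_singleton _)

lemma measurableSet_socialComplier (hD : ∀ z z', Measurable (D z z')) :
    MeasurableSet (socialComplier D) :=
  (hD _ _ (measurableSet_singleton _)).inter (hD _ _ (measurableSet_singleton _))

lemma measurableSet_complier (hD : ∀ z z', Measurable (D z z')) :
    MeasurableSet (complier D) :=
  (hD _ _ (measurableSet_singleton _)).inter (hD _ _ (measurableSet_singleton _))

lemma measurableSet_groupComplier (hD : ∀ z z', Measurable (D z z')) :
    MeasurableSet (groupComplier D) :=
  (hD _ _ (measurableSet_singleton _)).inter (hD _ _ (measurableSet_singleton _))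

lemma measurableSet_neverTaker (hD : ∀ z z', Measurable (D z z')) :
    MeasurableSet (neverTaker D) :=
  hD _ _ (measurableSet_singleton _)

end ComplianceTypes

section PotentialOutcomes

variable {Ω : Type*} (Y : Bool → Bool → Ω → ℝ) (Di Dj : Bool → Bool → Ω → Bool)

lemma sub_eq_sum_mul_indicator_types {ω : Ω} (hi : MonotoneResponseAt Di ω)
    (hj : MonotoneResponseAt Dj ω) :
    Y (Di true false ω) (Dj false true ω) ω - Y (Di false false ω) (Dj false false ω) ω
    = (Y true false ω - Y false false ω) * ((complier Di ∪ socialComplier Di) ∩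
          (complier Dj ∪ groupComplier Dj ∪ neverTaker Dj)).indicator (fun _ => 1) ω
      + (Y true true ω - Y false false ω) *
          ((complier Di ∪ socialComplier Di) ∩ socialComplier Dj).indicator (fun _ => 1) ω
      + (Y true true ω - Y false true ω) *
          ((complier Di ∪ socialComplier Di) ∩ alwaysTaker Dj).indicator (fun _ => 1) ω
      + (Y false true ω - Y false false ω) *
          ((groupComplier Di ∪ neverTaker Di) ∩ socialComplier Dj).indicator (fun _ => 1) ω
      + (Y true true ω - Y true false ω) *
          (alwaysTaker Di ∩ socialComplier Dj).indicator (fun _ => 1) ω := by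
  rcases hi.response_cases with ⟨a₁, a₂, a₃, a₄⟩ | ⟨a₁, a₂, a₃, a₄⟩ | ⟨a₁, a₂, a₃, a₄⟩ |
      ⟨a₁, a₂, a₃, a₄⟩ | ⟨a₁, a₂, a₃, a₄⟩ <;>
    rcases hj.response_cases with ⟨b₁, b₂, b₃, b₄⟩ | ⟨b₁, b₂, b₃, b₄⟩ | ⟨b₁, b₂, b₃, b₄⟩ |
      ⟨b₁, b₂, b₃, b₄⟩ | ⟨b₁, b₂, b₃, b₄⟩ <;>
    simp [alwaysTaker, socialComplier, complier, groupComplier, neverTaker, *]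

variable [MeasurableSpace Ω] {P : Measure Ω}

lemma integrable_observed (hYint : ∀ d d', Integrable (Y d d') P)
    (hDimeas : ∀ z z', Measurable (Di z z')) (hDjmeas : ∀ z z', Measurable (Dj z z'))
    (z z' : Bool) : Integrable (fun ω => Y (Di z z' ω) (Dj z' z ω) ω) P :=
  integrable_apply_comp_bool (fun d => integrable_apply_comp_bool (hYint d) (hDjmeas z' z))
    (hDimeas z z')

lemma integral_cond_eq_integral_potential [IsFiniteMeasure P] (Zi Zj : Ω → Bool)
    (hYint : ∀ d d', Integrable (Y d d') P)
    (hDimeas : ∀ z z', Measurable (Di z z')) (hDjmeas : ∀ z z', Measurable (Dj z z'))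
    (hZi : Measurable Zi) (hZj : Measurable Zj)
    (hIV : IndepFun
      (fun ω => ((fun d d' => Y d d' ω), (fun z z' => Di z z' ω), (fun z z' => Dj z z' ω)))
      (fun ω => (Zi ω, Zj ω)) P)
    {z z' : Bool} (hpos : P ({x | Zi x = z} ∩ {x | Zj x = z'}) ≠ 0) :
    ∫ ω, Y (Di (Zi ω) (Zj ω) ω) (Dj (Zj ω) (Zi ω) ω) ω ∂P[|{x | Zi x = z} ∩ {x | Zj x = z'}]
      = ∫ ω, Y (Di z z' ω) (Dj z' z ω) ω ∂P := by
  have hA : {x | Zi x = z} ∩ {x | Zj x = z'} = (fun ω => (Zi ω, Zj ω)) ⁻¹' {(z, z')} := by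
    ext; simp
  have hpotential : Measurable fun p : (Bool → Bool → ℝ) × (Bool → Bool → Bool) ×
      (Bool → Bool → Bool) => p.1 (p.2.1 z z') (p.2.2 z' z) :=
    measurable_from_prod_countable_left fun _ => by dsimp only; fun_prop
  rw [hA] at hpos ⊢
  calc _ = ∫ ω, Y (Di z z' ω) (Dj z' z ω) ω ∂P[|(fun ω => (Zi ω, Zj ω)) ⁻¹' {(z, z')}] :=
        integral_congr_ae <| (ae_cond_mem ((hZi.prodMk hZj) (measurableSet_singleton _))).mono
          fun ω hω => by obtain ⟨hzi, hzj⟩ := Prod.mk.inj hω; rw [hzi, hzj]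
    _ = _ := IndepFun.integral_cond_preimage (hIV.comp hpotential measurable_id)
        (integrable_observed Y Di Dj hYint hDimeas hDjmeas z z') (hZi.prodMk hZj)
        (measurableSet_singleton _) hpos

lemma integral_sub_eq_sum_integral_types (hYint : ∀ d d', Integrable (Y d d') P)
    (hDimeas : ∀ z z', Measurable (Di z z')) (hDjmeas : ∀ z z', Measurable (Dj z z'))
    (hmono : ∀ᵐ ω ∂P, MonotoneResponseAt Di ω ∧ MonotoneResponseAt Dj ω) :
    ∫ ω, Y (Di true false ω) (Dj false true ω) ω - Y (Di false false ω) (Dj false false ω) ω ∂P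
    = (∫ ω, (Y true false ω - Y false false ω) * ((complier Di ∪ socialComplier Di) ∩
          (complier Dj ∪ groupComplier Dj ∪ neverTaker Dj)).indicator (fun _ => 1) ω ∂P)
      + (∫ ω, (Y true true ω - Y false false ω) *
          ((complier Di ∪ socialComplier Di) ∩ socialComplier Dj).indicator (fun _ => 1) ω ∂P)
      + (∫ ω, (Y true true ω - Y false true ω) *
          ((complier Di ∪ socialComplier Di) ∩ alwaysTaker Dj).indicator (fun _ => 1) ω ∂P)
      + (∫ ω, (Y false true ω - Y false false ω) *
          ((groupComplier Di ∪ neverTaker Di) ∩ socialComplier Dj).indicator (fun _ => 1) ω ∂P)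
      + (∫ ω, (Y true true ω - Y true false ω) *
          (alwaysTaker Di ∩ socialComplier Dj).indicator (fun _ => 1) ω ∂P) := by
  have hdiff : ∀ d d' e e', Integrable (fun ω => Y d d' ω - Y e e' ω) P :=
    fun d d' e e' => (hYint d d').sub (hYint e e')
  have hCi := (measurableSet_complier hDimeas).union (measurableSet_socialComplier hDimeas)
  have hSCj := measurableSet_socialComplier hDjmeas
  have h₁ := (hdiff true false false false).mul_indicator_one <| hCi.inter <|
    ((measurableSet_complier hDjmeas).union (measurableSet_groupComplier hDjmeas)).union
      (measurableSet_neverTaker hDjmeas)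
  have h₂ := (hdiff true true false false).mul_indicator_one (hCi.inter hSCj)
  have h₃ := (hdiff true true false true).mul_indicator_one
    (hCi.inter (measurableSet_alwaysTaker hDjmeas))
  have h₄ := (hdiff false true false false).mul_indicator_one <|
    ((measurableSet_groupComplier hDimeas).union (measurableSet_neverTaker hDimeas)).inter hSCj
  have h₅ := (hdiff true true true false).mul_indicator_one
    ((measurableSet_alwaysTaker hDimeas).inter hSCj)
  rw [integral_congr_ae (hmono.mono fun ω h => sub_eq_sum_mul_indicator_types Y Di Dj h.1 h.2),
    integral_add (((h₁.fun_add h₂).fun_add h₃).fun_add h₄) h₅,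
    integral_add ((h₁.fun_add h₂).fun_add h₃) h₄,
    integral_add (h₁.fun_add h₂) h₃, integral_add h₁ h₂]

end PotentialOutcomes

theorem stmt_2_general
    {Ω : Type*} [MeasurableSpace Ω] (P : Measure Ω) [IsProbabilityMeasure P]
    (Y : Bool → Bool → Ω → ℝ) (Di Dj : Bool → Bool → Ω → Bool)
    (Zi Zj : Ω → Bool)
    (hYint : ∀ d d', Integrable (Y d d') P)
    (hDimeas : ∀ z z', Measurable (Di z z'))
    (hDjmeas : ∀ z z', Measurable (Dj z z'))
    (hZi : Measurable Zi) (hZj : Measurable Zj)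
    (hpos : ∀ z z', 0 < P ({x | Zi x = z} ∩ {x | Zj x = z'}))
    (hIV : IndepFun
      (fun ω => ((fun d d' => Y d d' ω),
                 (fun z z' => Di z z' ω),
                 (fun z z' => Dj z z' ω)))
      (fun ω => (Zi ω, Zj ω)) P)
    (hmono : ∀ᵐ ω ∂P,
      (Di false false ω ≤ Di false true ω ∧ Di false true ω ≤ Di true false ω ∧
        Di true false ω ≤ Di true true ω) ∧
      (Dj false false ω ≤ Dj false true ω ∧ Dj false true ω ≤ Dj true false ω ∧
        Dj true false ω ≤ Dj true true ω))
    :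
    (∫ ω, (Y (Di (Zi ω) (Zj ω) ω) (Dj (Zj ω) (Zi ω) ω) ω) ∂(P[|({x | Zi x = true} ∩ {x | Zj x = false})])) - (∫ ω, (Y (Di (Zi ω) (Zj ω) ω) (Dj (Zj ω) (Zi ω) ω) ω) ∂(P[|({x | Zi x = false} ∩ {x | Zj x = false})]))
    = (∫ ω, (Y true false ω - Y false false ω) * Set.indicator (({x | Di true false x = true ∧ Di false true x = false} ∪ {x | Di false true x = true ∧ Di false false x = false}) ∩ ({x | Dj true false x = true ∧ Dj false true x = false} ∪ {x | Dj true true x = true ∧ Dj true false x = false} ∪ {x | Dj true true x = false})) (fun _ => (1:ℝ)) ω ∂P)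
      + (∫ ω, (Y true true ω - Y false false ω) * Set.indicator (({x | Di true false x = true ∧ Di false true x = false} ∪ {x | Di false true x = true ∧ Di false false x = false}) ∩ {x | Dj false true x = true ∧ Dj false false x = false}) (fun _ => (1:ℝ)) ω ∂P)
      + (∫ ω, (Y true true ω - Y false true ω) * Set.indicator (({x | Di true false x = true ∧ Di false true x = false} ∪ {x | Di false true x = true ∧ Di false false x = false}) ∩ {x | Dj false false x = true}) (fun _ => (1:ℝ)) ω ∂P)
      + (∫ ω, (Y false true ω - Y false false ω) * Set.indicator (({x | Di true true x = true ∧ Di true false x = false} ∪ {x | Di true true x = false}) ∩ {x | Dj false true x = true ∧ Dj false false x = false}) (fun _ => (1:ℝ)) ω ∂P)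
      + (∫ ω, (Y true true ω - Y true false ω) * Set.indicator ({x | Di false false x = true} ∩ {x | Dj false true x = true ∧ Dj false false x = false}) (fun _ => (1:ℝ)) ω ∂P) := by
  rw [integral_cond_eq_integral_potential Y Di Dj Zi Zj hYint hDimeas hDjmeas hZi hZj hIV
      (hpos true false).ne',
    integral_cond_eq_integral_potential Y Di Dj Zi Zj hYint hDimeas hDjmeas hZi hZj hIV
      (hpos false false).ne',
    ← integral_sub (integrable_observed Y Di Dj hYint hDimeas hDjmeas true false)
      (integrable_observed Y Di Dj hYint hDimeas hDjmeas false false)]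
  exact integral_sub_eq_sum_integral_types Y Di Dj hYint hDimeas hDjmeas hmono

theorem stmt_2
    {Ω : Type*} [MeasurableSpace Ω] (P : Measure Ω) [IsProbabilityMeasure P]
    (Y : Bool → Bool → Ω → ℝ) (Di Dj : Bool → Bool → Ω → Bool)
    (Zi Zj : Ω → Bool)
    (hYmeas : ∀ d d', Measurable (Y d d'))
    (hYint : ∀ d d', Integrable (Y d d') P)
    (hDimeas : ∀ z z', Measurable (Di z z'))
    (hDjmeas : ∀ z z', Measurable (Dj z z'))
    (hZi : Measurable Zi) (hZj : Measurable Zj)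
    (hpos : ∀ z z', 0 < P ({x | Zi x = z} ∩ {x | Zj x = z'}))
    (hIV : IndepFun
      (fun ω => ((fun d d' => Y d d' ω),
                 (fun z z' => Di z z' ω),
                 (fun z z' => Dj z z' ω)))
      (fun ω => (Zi ω, Zj ω)) P)
    (hmono : ∀ᵐ ω ∂P,
      (Di false false ω ≤ Di false true ω ∧ Di false true ω ≤ Di true false ω ∧
        Di true false ω ≤ Di true true ω) ∧
      (Dj false false ω ≤ Dj false true ω ∧ Dj false true ω ≤ Dj true false ω ∧
        Dj true false ω ≤ Dj true true ω))
    :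
    (∫ ω, (Y (Di (Zi ω) (Zj ω) ω) (Dj (Zj ω) (Zi ω) ω) ω) ∂(P[|({x | Zi x = true} ∩ {x | Zj x = false})])) - (∫ ω, (Y (Di (Zi ω) (Zj ω) ω) (Dj (Zj ω) (Zi ω) ω) ω) ∂(P[|({x | Zi x = false} ∩ {x | Zj x = false})]))
    = (∫ ω, (Y true false ω - Y false false ω) * Set.indicator (({x | Di true false x = true ∧ Di false true x = false} ∪ {x | Di false true x = true ∧ Di false false x = false}) ∩ ({x | Dj true false x = true ∧ Dj false true x = false} ∪ {x | Dj true true x = true ∧ Dj true false x = false} ∪ {x | Dj true true x = false})) (fun _ => (1:ℝ)) ω ∂P)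
      + (∫ ω, (Y true true ω - Y false false ω) * Set.indicator (({x | Di true false x = true ∧ Di false true x = false} ∪ {x | Di false true x = true ∧ Di false false x = false}) ∩ {x | Dj false true x = true ∧ Dj false false x = false}) (fun _ => (1:ℝ)) ω ∂P)
      + (∫ ω, (Y true true ω - Y false true ω) * Set.indicator (({x | Di true false x = true ∧ Di false true x = false} ∪ {x | Di false true x = true ∧ Di false false x = false}) ∩ {x | Dj false false x = true}) (fun _ => (1:ℝ)) ω ∂P)
      + (∫ ω, (Y false true ω - Y false false ω) * Set.indicator (({x | Di true true x = true ∧ Di true false x = false} ∪ {x | Di true true x = false}) ∩ {x | Dj false true x = true ∧ Dj false false x = false}) (fun _ => (1:ℝ)) ω ∂P)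
      + (∫ ω, (Y true true ω - Y true false ω) * Set.indicator ({x | Di false false x = true} ∩ {x | Dj false true x = true ∧ Dj false false x = false}) (fun _ => (1:ℝ)) ω ∂P) :=
  stmt_2_general P Y Di Dj Zi Zj hYint hDimeas hDjmeas hZi hZj hpos hIV hmono
end

section
/- Indirect (spillover) intention-to-treat decomposition: under Assumptions 1 and 2, E[Y | Z_i=0, Z_j=1] − E[Y | Z_i=0, Z_j=0] = E[(Y(1,0)−Y(0,0)) · 1_{SC_i ∩ (GC_j ∪ NT_j)}] + E[(Y(1,1)−Y(0,0)) · 1_{SC_i ∩ (SC_j ∪ C_j)}] + E[(Y(1,1)−Y(0,1)) · 1_{SC_i ∩ AT_j}] + E[(Y(0,1)−Y(0,0)) · 1_{(C_i ∪ GC_i ∪ NT_i) ∩ (SC_j ∪ C_j)}] + E[(Y(1,1)−Y(1,0)) · 1_{AT_i ∩ (SC_j ∪ C_j)}], where 1_A denotes the indicator of the event A. -/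
/-!
Independence of the instruments from `(Y, Dᵢ, Dⱼ)` means that conditioning on an instrument cell
`{Zᵢ = z, Zⱼ = z'}` leaves the law of `(Y, Dᵢ, Dⱼ)` unchanged, so the conditional mean of the
observed outcome in that cell is the unconditional mean of `Y (Dᵢ(z, z')) (Dⱼ(z', z))`.
The difference of the two cells is then computed pointwise: by monotonicity each unit has one of
five compliance types, and in each of the 25 combinations the change from
`Y (Dᵢ(0,0)) (Dⱼ(0,0))` to `Y (Dᵢ(0,1)) (Dⱼ(1,0))` is the single term of the decomposition
belonging to that combination (or zero).
-/

open MeasureTheory ProbabilityTheory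

namespace ProbabilityTheory

variable {Ω α β : Type*} {mΩ : MeasurableSpace Ω} {mα : MeasurableSpace α} {mβ : MeasurableSpace β}
  {μ : Measure Ω} [IsFiniteMeasure μ] {X : Ω → α} {Z : Ω → β} {B : Set β}

lemma IndepFun.map_cond_preimage (h : IndepFun X Z μ) (hX : AEMeasurable X μ) (hZ : Measurable Z)
    (hB : MeasurableSet B) (hB0 : μ (Z ⁻¹' B) ≠ 0) :
    (μ[|Z ⁻¹' B]).map X = μ.map X := by
  ext A hA
  rw [Measure.map_apply_of_aemeasurable (hX.mono_ac cond_absolutelyContinuous) hA,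
    Measure.map_apply_of_aemeasurable hX hA, cond_apply (hZ hB), Set.inter_comm,
    h.measure_inter_preimage_eq_mul _ _ hA hB, mul_left_comm,
    ENNReal.inv_mul_cancel hB0 (measure_ne_top _ _), mul_one]

lemma IndepFun.integral_comp_cond_preimage {E : Type*} [NormedAddCommGroup E] [NormedSpace ℝ E]
    (h : IndepFun X Z μ) (hX : AEMeasurable X μ) (hZ : Measurable Z)
    (hB : MeasurableSet B) (hB0 : μ (Z ⁻¹' B) ≠ 0) {f : α → E} (hf : StronglyMeasurable f) :
    ∫ ω, f (X ω) ∂μ[|Z ⁻¹' B] = ∫ ω, f (X ω) ∂μ := by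
  rw [← integral_map (hX.mono_ac cond_absolutelyContinuous) hf.aestronglyMeasurable,
    h.map_cond_preimage hX hZ hB hB0, integral_map hX hf.aestronglyMeasurable]

end ProbabilityTheory

namespace MeasureTheory

variable {Ω ι E : Type*} {mΩ : MeasurableSpace Ω} {μ : Measure Ω} [NormedAddCommGroup E]

lemma integrable_eval_of_fintype [Fintype ι] [MeasurableSpace ι] [MeasurableSingletonClass ι]
    {g : ι → Ω → E} (hg : ∀ i, Integrable (g i) μ) {f : Ω → ι} (hf : Measurable f) :
    Integrable (fun ω => g (f ω) ω) μ := by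
  have : (fun ω => g (f ω) ω) = fun ω => ∑ i, (f ⁻¹' {i}).indicator (g i) ω := by
    ext ω
    rw [Finset.sum_eq_single (f ω), Set.indicator_of_mem (show ω ∈ f ⁻¹' {f ω} from rfl)]
    · exact fun i _ hi => Set.indicator_of_notMem (show ω ∉ f ⁻¹' {i} from Ne.symm hi) _
    · exact fun h => absurd (Finset.mem_univ _) h
  rw [this]
  exact integrable_finsetSum _ fun i _ => (hg i).indicator (hf (measurableSet_singleton i))

lemma Integrable.mul_indicator_one_s3 {f : Ω → ℝ} (hf : Integrable f μ) {s : Set Ω}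
    (hs : MeasurableSet s) : Integrable (fun ω => f ω * s.indicator (fun _ => (1 : ℝ)) ω) μ := by
  simpa only [← Set.indicator_mul_right, mul_one] using hf.indicator hs

end MeasureTheory

lemma Bool.chain_cases {a b c d : Bool} (hab : a ≤ b) (hbc : b ≤ c) (hcd : c ≤ d) :
    (a = false ∧ b = false ∧ c = false ∧ d = false) ∨
    (a = false ∧ b = false ∧ c = false ∧ d = true) ∨
    (a = false ∧ b = false ∧ c = true ∧ d = true) ∨
    (a = false ∧ b = true ∧ c = true ∧ d = true) ∨
    (a = true ∧ b = true ∧ c = true ∧ d = true) := by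
  revert hab hbc hcd
  cases a <;> cases b <;> cases c <;> cases d <;> decide

section ComplianceTypes

variable {Ω : Type*} (D : Bool → Bool → Ω → Bool)

def MonotoneResponse (ω : Ω) : Prop :=
  D false false ω ≤ D false true ω ∧ D false true ω ≤ D true false ω ∧ D true false ω ≤ D true true ω

variable {D}

lemma measurableSet_complianceTypes {mΩ : MeasurableSpace Ω} (hD : ∀ z z', Measurable (D z z')) :
    MeasurableSet (alwaysTaker D) ∧ MeasurableSet (socialComplier D) ∧
      MeasurableSet (complier D) ∧ MeasurableSet (groupComplier D) ∧
      MeasurableSet (neverTaker D) := by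
  have h (z z' b) : MeasurableSet {x | D z z' x = b} := hD z z' (measurableSet_singleton b)
  exact ⟨h _ _ _, (h _ _ _).inter (h _ _ _), (h _ _ _).inter (h _ _ _),
    (h _ _ _).inter (h _ _ _), h _ _ _⟩

end ComplianceTypes

section PotentialOutcomes

variable {Ω : Type*} (Y : Bool → Bool → Ω → ℝ) (Di Dj : Bool → Bool → Ω → Bool)

lemma realized_sub_eq_sum_indicator {ω : Ω} (hi : MonotoneResponse Di ω)
    (hj : MonotoneResponse Dj ω) :
    Y (Di false true ω) (Dj true false ω) ω - Y (Di false false ω) (Dj false false ω) ω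
      = (Y true false ω - Y false false ω) *
          (socialComplier Di ∩ (groupComplier Dj ∪ neverTaker Dj)).indicator (fun _ => 1) ω
      + (Y true true ω - Y false false ω) *
          (socialComplier Di ∩ (socialComplier Dj ∪ complier Dj)).indicator (fun _ => 1) ω
      + (Y true true ω - Y false true ω) *
          (socialComplier Di ∩ alwaysTaker Dj).indicator (fun _ => 1) ω
      + (Y false true ω - Y false false ω) *
          ((complier Di ∪ groupComplier Di ∪ neverTaker Di) ∩
            (socialComplier Dj ∪ complier Dj)).indicator (fun _ => 1) ω
      + (Y true true ω - Y true false ω) *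
          (alwaysTaker Di ∩ (socialComplier Dj ∪ complier Dj)).indicator (fun _ => 1) ω := by
  obtain ⟨hi₁, hi₂, hi₃⟩ := hi
  obtain ⟨hj₁, hj₂, hj₃⟩ := hj
  simp only [Set.indicator_apply, Set.mem_inter_iff, Set.mem_union, alwaysTaker, socialComplier,
    complier, groupComplier, neverTaker, Set.mem_ofPred_eq]
  rcases Bool.chain_cases hi₁ hi₂ hi₃ with h | h | h | h | h <;>
  rcases Bool.chain_cases hj₁ hj₂ hj₃ with k | k | k | k | k <;>
  simp only [h, k] <;> norm_num

end PotentialOutcomes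

section InstrumentalVariables

def realizedOutcome (z z' : Bool)
    (p : (Bool → Bool → ℝ) × (Bool → Bool → Bool) × (Bool → Bool → Bool)) : ℝ :=
  p.1 (p.2.1 z z') (p.2.2 z' z)

lemma measurable_realizedOutcome (z z' : Bool) : Measurable (realizedOutcome z z') := by
  have heval : Measurable fun q : (Bool → Bool → ℝ) × Bool × Bool => q.1 q.2.1 q.2.2 :=
    measurable_from_prod_countable_left fun d =>
      (measurable_pi_apply d.2).comp (measurable_pi_apply d.1)
  exact heval.comp
    (f := fun p : (Bool → Bool → ℝ) × (Bool → Bool → Bool) × (Bool → Bool → Bool) =>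
      (p.1, p.2.1 z z', p.2.2 z' z)) (by fun_prop)

variable {Ω : Type*} {mΩ : MeasurableSpace Ω} {P : Measure Ω}
  {Y : Bool → Bool → Ω → ℝ} {Di Dj : Bool → Bool → Ω → Bool} {Zi Zj : Ω → Bool}

lemma integral_observed_cond_eq [IsFiniteMeasure P] (hYint : ∀ d d', Integrable (Y d d') P)
    (hDi : ∀ z z', Measurable (Di z z')) (hDj : ∀ z z', Measurable (Dj z z'))
    (hZi : Measurable Zi) (hZj : Measurable Zj)
    (hIV : IndepFun (fun ω => ((fun d d' => Y d d' ω), (fun z z' => Di z z' ω),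
      (fun z z' => Dj z z' ω))) (fun ω => (Zi ω, Zj ω)) P)
    {z z' : Bool} (hpos : P ({x | Zi x = z} ∩ {x | Zj x = z'}) ≠ 0) :
    ∫ ω, Y (Di (Zi ω) (Zj ω) ω) (Dj (Zj ω) (Zi ω) ω) ω ∂P[|({x | Zi x = z} ∩ {x | Zj x = z'})]
      = ∫ ω, Y (Di z z' ω) (Dj z' z ω) ω ∂P := by
  have hcell : {x | Zi x = z} ∩ {x | Zj x = z'} = (fun ω => (Zi ω, Zj ω)) ⁻¹' {(z, z')} := by
    ext; simp
  have hY : ∀ d d', AEMeasurable (Y d d') P := fun d d' => (hYint d d').aemeasurable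
  have hX : AEMeasurable (fun ω => ((fun d d' => Y d d' ω), (fun z z' => Di z z' ω),
      (fun z z' => Dj z z' ω))) P := by
    fun_prop
  calc _ = ∫ ω, realizedOutcome z z' ((fun d d' => Y d d' ω), (fun z z' => Di z z' ω),
        (fun z z' => Dj z z' ω)) ∂P[|({x | Zi x = z} ∩ {x | Zj x = z'})] := by
        refine integral_congr_ae ?_
        filter_upwards [ae_cond_mem ((hZi (measurableSet_singleton z)).inter
          (hZj (measurableSet_singleton z')))] with ω ⟨rfl, rfl⟩
        rfl
    _ = _ := by
      rw [hcell] at hpos ⊢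
      exact hIV.integral_comp_cond_preimage hX (hZi.prodMk hZj) (measurableSet_singleton _) hpos
        (measurable_realizedOutcome z z').stronglyMeasurable

lemma integral_realized_sub_eq_sum (hYint : ∀ d d', Integrable (Y d d') P)
    (hDi : ∀ z z', Measurable (Di z z')) (hDj : ∀ z z', Measurable (Dj z z'))
    (hmono : ∀ᵐ ω ∂P, MonotoneResponse Di ω ∧ MonotoneResponse Dj ω) :
    ∫ ω, Y (Di false true ω) (Dj true false ω) ω ∂P
        - ∫ ω, Y (Di false false ω) (Dj false false ω) ω ∂P
      = ∫ ω, (Y true false ω - Y false false ω) *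
          (socialComplier Di ∩ (groupComplier Dj ∪ neverTaker Dj)).indicator (fun _ => 1) ω ∂P
      + ∫ ω, (Y true true ω - Y false false ω) *
          (socialComplier Di ∩ (socialComplier Dj ∪ complier Dj)).indicator (fun _ => 1) ω ∂P
      + ∫ ω, (Y true true ω - Y false true ω) *
          (socialComplier Di ∩ alwaysTaker Dj).indicator (fun _ => 1) ω ∂P
      + ∫ ω, (Y false true ω - Y false false ω) *
          ((complier Di ∪ groupComplier Di ∪ neverTaker Di) ∩
            (socialComplier Dj ∪ complier Dj)).indicator (fun _ => 1) ω ∂P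
      + ∫ ω, (Y true true ω - Y true false ω) *
          (alwaysTaker Di ∩ (socialComplier Dj ∪ complier Dj)).indicator (fun _ => 1) ω ∂P := by
  have hrealized (z z' : Bool) : Integrable (fun ω => Y (Di z z' ω) (Dj z' z ω) ω) P :=
    integrable_eval_of_fintype (g := fun d : Bool × Bool => Y d.1 d.2) (fun _ => hYint _ _)
      ((hDi z z').prodMk (hDj z' z))
  have hterm (a b c d : Bool) {S : Set Ω} (hS : MeasurableSet S) :
      Integrable (fun ω => (Y a b ω - Y c d ω) * S.indicator (fun _ => 1) ω) P :=
    ((hYint a b).sub (hYint c d)).mul_indicator_one_s3 hS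
  obtain ⟨hATi, hSCi, hCi, hGCi, hNTi⟩ := measurableSet_complianceTypes hDi
  obtain ⟨hATj, hSCj, hCj, hGCj, hNTj⟩ := measurableSet_complianceTypes hDj
  have h₁ := hterm true false false false (hSCi.inter (hGCj.union hNTj))
  have h₂ := hterm true true false false (hSCi.inter (hSCj.union hCj))
  have h₃ := hterm true true false true (hSCi.inter hATj)
  have h₄ := hterm false true false false (((hCi.union hGCi).union hNTi).inter (hSCj.union hCj))
  have h₅ := hterm true true true false (hATi.inter (hSCj.union hCj))
  rw [← integral_sub (hrealized _ _) (hrealized _ _),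
    integral_congr_ae (hmono.mono fun ω h => realized_sub_eq_sum_indicator Y Di Dj h.1 h.2),
    integral_add, integral_add, integral_add, integral_add] <;> fun_prop

end InstrumentalVariables

theorem stmt_3_general
    {Ω : Type*} [MeasurableSpace Ω] (P : Measure Ω) [IsProbabilityMeasure P]
    (Y : Bool → Bool → Ω → ℝ) (Di Dj : Bool → Bool → Ω → Bool)
    (Zi Zj : Ω → Bool)
    (hYint : ∀ d d', Integrable (Y d d') P)
    (hDimeas : ∀ z z', Measurable (Di z z'))
    (hDjmeas : ∀ z z', Measurable (Dj z z'))
    (hZi : Measurable Zi) (hZj : Measurable Zj)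
    (hpos : ∀ z z', 0 < P ({x | Zi x = z} ∩ {x | Zj x = z'}))
    (hIV : IndepFun
      (fun ω => ((fun d d' => Y d d' ω),
                 (fun z z' => Di z z' ω),
                 (fun z z' => Dj z z' ω)))
      (fun ω => (Zi ω, Zj ω)) P)
    (hmono : ∀ᵐ ω ∂P,
      (Di false false ω ≤ Di false true ω ∧ Di false true ω ≤ Di true false ω ∧
        Di true false ω ≤ Di true true ω) ∧
      (Dj false false ω ≤ Dj false true ω ∧ Dj false true ω ≤ Dj true false ω ∧
        Dj true false ω ≤ Dj true true ω))
    :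
    (∫ ω, (Y (Di (Zi ω) (Zj ω) ω) (Dj (Zj ω) (Zi ω) ω) ω) ∂(P[|({x | Zi x = false} ∩ {x | Zj x = true})])) - (∫ ω, (Y (Di (Zi ω) (Zj ω) ω) (Dj (Zj ω) (Zi ω) ω) ω) ∂(P[|({x | Zi x = false} ∩ {x | Zj x = false})]))
    = (∫ ω, (Y true false ω - Y false false ω) * Set.indicator ({x | Di false true x = true ∧ Di false false x = false} ∩ ({x | Dj true true x = true ∧ Dj true false x = false} ∪ {x | Dj true true x = false})) (fun _ => (1:ℝ)) ω ∂P)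
      + (∫ ω, (Y true true ω - Y false false ω) * Set.indicator ({x | Di false true x = true ∧ Di false false x = false} ∩ ({x | Dj false true x = true ∧ Dj false false x = false} ∪ {x | Dj true false x = true ∧ Dj false true x = false})) (fun _ => (1:ℝ)) ω ∂P)
      + (∫ ω, (Y true true ω - Y false true ω) * Set.indicator ({x | Di false true x = true ∧ Di false false x = false} ∩ {x | Dj false false x = true}) (fun _ => (1:ℝ)) ω ∂P)
      + (∫ ω, (Y false true ω - Y false false ω) * Set.indicator (({x | Di true false x = true ∧ Di false true x = false} ∪ {x | Di true true x = true ∧ Di true false x = false} ∪ {x | Di true true x = false}) ∩ ({x | Dj false true x = true ∧ Dj false false x = false} ∪ {x | Dj true false x = true ∧ Dj false true x = false})) (fun _ => (1:ℝ)) ω ∂P)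
      + (∫ ω, (Y true true ω - Y true false ω) * Set.indicator ({x | Di false false x = true} ∩ ({x | Dj false true x = true ∧ Dj false false x = false} ∪ {x | Dj true false x = true ∧ Dj false true x = false})) (fun _ => (1:ℝ)) ω ∂P) := by
  rw [integral_observed_cond_eq hYint hDimeas hDjmeas hZi hZj hIV (hpos false true).ne',
    integral_observed_cond_eq hYint hDimeas hDjmeas hZi hZj hIV (hpos false false).ne']
  exact integral_realized_sub_eq_sum hYint hDimeas hDjmeas hmono

theorem stmt_3
    {Ω : Type*} [MeasurableSpace Ω] (P : Measure Ω) [IsProbabilityMeasure P]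
    (Y : Bool → Bool → Ω → ℝ) (Di Dj : Bool → Bool → Ω → Bool)
    (Zi Zj : Ω → Bool)
    (hYmeas : ∀ d d', Measurable (Y d d'))
    (hYint : ∀ d d', Integrable (Y d d') P)
    (hDimeas : ∀ z z', Measurable (Di z z'))
    (hDjmeas : ∀ z z', Measurable (Dj z z'))
    (hZi : Measurable Zi) (hZj : Measurable Zj)
    (hpos : ∀ z z', 0 < P ({x | Zi x = z} ∩ {x | Zj x = z'}))
    (hIV : IndepFun
      (fun ω => ((fun d d' => Y d d' ω),
                 (fun z z' => Di z z' ω),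
                 (fun z z' => Dj z z' ω)))
      (fun ω => (Zi ω, Zj ω)) P)
    (hmono : ∀ᵐ ω ∂P,
      (Di false false ω ≤ Di false true ω ∧ Di false true ω ≤ Di true false ω ∧
        Di true false ω ≤ Di true true ω) ∧
      (Dj false false ω ≤ Dj false true ω ∧ Dj false true ω ≤ Dj true false ω ∧
        Dj true false ω ≤ Dj true true ω))
    :
    (∫ ω, (Y (Di (Zi ω) (Zj ω) ω) (Dj (Zj ω) (Zi ω) ω) ω) ∂(P[|({x | Zi x = false} ∩ {x | Zj x = true})])) - (∫ ω, (Y (Di (Zi ω) (Zj ω) ω) (Dj (Zj ω) (Zi ω) ω) ω) ∂(P[|({x | Zi x = false} ∩ {x | Zj x = false})]))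
    = (∫ ω, (Y true false ω - Y false false ω) * Set.indicator ({x | Di false true x = true ∧ Di false false x = false} ∩ ({x | Dj true true x = true ∧ Dj true false x = false} ∪ {x | Dj true true x = false})) (fun _ => (1:ℝ)) ω ∂P)
      + (∫ ω, (Y true true ω - Y false false ω) * Set.indicator ({x | Di false true x = true ∧ Di false false x = false} ∩ ({x | Dj false true x = true ∧ Dj false false x = false} ∪ {x | Dj true false x = true ∧ Dj false true x = false})) (fun _ => (1:ℝ)) ω ∂P)
      + (∫ ω, (Y true true ω - Y false true ω) * Set.indicator ({x | Di false true x = true ∧ Di false false x = false} ∩ {x | Dj false false x = true}) (fun _ => (1:ℝ)) ω ∂P)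
      + (∫ ω, (Y false true ω - Y false false ω) * Set.indicator (({x | Di true false x = true ∧ Di false true x = false} ∪ {x | Di true true x = true ∧ Di true false x = false} ∪ {x | Di true true x = false}) ∩ ({x | Dj false true x = true ∧ Dj false false x = false} ∪ {x | Dj true false x = true ∧ Dj false true x = false})) (fun _ => (1:ℝ)) ω ∂P)
      + (∫ ω, (Y true true ω - Y true false ω) * Set.indicator ({x | Di false false x = true} ∩ ({x | Dj false true x = true ∧ Dj false false x = false} ∪ {x | Dj true false x = true ∧ Dj false true x = false})) (fun _ => (1:ℝ)) ω ∂P) :=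
  stmt_3_general P Y Di Dj Zi Zj hYint hDimeas hDjmeas hZi hZj hpos hIV hmono
end

section
/- Naive intention-to-treat decomposition: if Y is an integrable random variable and P[Z_i=z, Z_j=z'] > 0 for all (z,z') ∈ {0,1}², then E[Y | Z_i=1] − E[Y | Z_i=0] = (E[Y | Z_i=1, Z_j=0] − E[Y | Z_i=0, Z_j=0]) · P[Z_j=0 | Z_i=1] + (E[Y | Z_i=1, Z_j=1] − E[Y | Z_i=0, Z_j=0]) · P[Z_j=1 | Z_i=1] − (E[Y | Z_i=0, Z_j=1] − E[Y | Z_i=0, Z_j=0]) · P[Z_j=1 | Z_i=0]; that is, the naive ITT equals the direct ITT plus the difference between the total and indirect ITTs, each weighted by the corresponding conditional assignment probability. -/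
open MeasureTheory ProbabilityTheory

lemma integral_cond_eq {Ω : Type*} [MeasurableSpace Ω] (P : Measure Ω) (Y : Ω → ℝ)
    (A : Set Ω) : ∫ ω, Y ω ∂(P[|A]) = (P A).toReal⁻¹ * ∫ ω in A, Y ω ∂P := by
  rw [ProbabilityTheory.cond, integral_smul_measure, ENNReal.toReal_inv, smul_eq_mul]

theorem stmt_5
    {Ω : Type*} [MeasurableSpace Ω] (P : Measure Ω) [IsProbabilityMeasure P]
    (Y : Ω → ℝ) (Zi Zj : Ω → Bool)
    (hYint : Integrable Y P)
    (hZi : Measurable Zi) (hZj : Measurable Zj)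
    (hpos : ∀ z z', 0 < P ({x | Zi x = z} ∩ {x | Zj x = z'}))
    :
    (∫ ω, Y ω ∂(P[|{x | Zi x = true}])) - (∫ ω, Y ω ∂(P[|{x | Zi x = false}]))
    = ((∫ ω, Y ω ∂(P[|({x | Zi x = true} ∩ {x | Zj x = false})])) - (∫ ω, Y ω ∂(P[|({x | Zi x = false} ∩ {x | Zj x = false})]))) * ((P[|{x | Zi x = true}]) {x | Zj x = false}).toReal
      + ((∫ ω, Y ω ∂(P[|({x | Zi x = true} ∩ {x | Zj x = true})])) - (∫ ω, Y ω ∂(P[|({x | Zi x = false} ∩ {x | Zj x = false})]))) * ((P[|{x | Zi x = true}]) {x | Zj x = true}).toReal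
      - ((∫ ω, Y ω ∂(P[|({x | Zi x = false} ∩ {x | Zj x = true})])) - (∫ ω, Y ω ∂(P[|({x | Zi x = false} ∩ {x | Zj x = false})]))) * ((P[|{x | Zi x = false}]) {x | Zj x = true}).toReal := by
  have hAt : MeasurableSet {x | Zi x = true} := hZi (measurableSet_singleton true)
  have hAf : MeasurableSet {x | Zi x = false} := hZi (measurableSet_singleton false)
  have hBt : MeasurableSet {x | Zj x = true} := hZj (measurableSet_singleton true)
  have hBf : MeasurableSet {x | Zj x = false} := hZj (measurableSet_singleton false)
  -- shorthand for measures (toReal)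
  set qtt := (P ({x | Zi x = true} ∩ {x | Zj x = true})).toReal with hqtt
  set qtf := (P ({x | Zi x = true} ∩ {x | Zj x = false})).toReal with hqtf
  set qft := (P ({x | Zi x = false} ∩ {x | Zj x = true})).toReal with hqft
  set qff := (P ({x | Zi x = false} ∩ {x | Zj x = false})).toReal with hqff
  have hqtt0 : 0 < qtt := ENNReal.toReal_pos (hpos true true).ne' (measure_ne_top _ _)
  have hqtf0 : 0 < qtf := ENNReal.toReal_pos (hpos true false).ne' (measure_ne_top _ _)
  have hqft0 : 0 < qft := ENNReal.toReal_pos (hpos false true).ne' (measure_ne_top _ _)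
  have hqff0 : 0 < qff := ENNReal.toReal_pos (hpos false false).ne' (measure_ne_top _ _)
  -- splitting of sets
  have hsplitT : {x | Zi x = true} ∩ {x | Zj x = true} ∪ {x | Zi x = true} ∩ {x | Zj x = false}
      = {x | Zi x = true} := by
    ext x; by_cases h : Zj x = true <;> simp [h]
  have hsplitF : {x | Zi x = false} ∩ {x | Zj x = true} ∪ {x | Zi x = false} ∩ {x | Zj x = false}
      = {x | Zi x = false} := by
    ext x; by_cases h : Zj x = true <;> simp [h]
  have hdisj : ∀ (A : Set Ω), Disjoint (A ∩ {x | Zj x = true}) (A ∩ {x | Zj x = false}) := by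
    intro A
    refine Set.disjoint_left.2 ?_
    rintro x ⟨-, h1⟩ ⟨-, h2⟩
    simp only [Set.mem_setOf_eq] at h1 h2
    rw [h1] at h2; exact Bool.noConfusion h2
  -- measure splits
  have hPAt : (P {x | Zi x = true}).toReal = qtt + qtf := by
    rw [← hsplitT, measure_union (hdisj _) (hAt.inter hBf),
      ENNReal.toReal_add (measure_ne_top _ _) (measure_ne_top _ _)]
  have hPAf : (P {x | Zi x = false}).toReal = qft + qff := by
    rw [← hsplitF, measure_union (hdisj _) (hAf.inter hBf),
      ENNReal.toReal_add (measure_ne_top _ _) (measure_ne_top _ _)]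
  -- integral splits
  have hIt : ∫ ω in {x | Zi x = true}, Y ω ∂P
      = (∫ ω in {x | Zi x = true} ∩ {x | Zj x = true}, Y ω ∂P)
        + ∫ ω in {x | Zi x = true} ∩ {x | Zj x = false}, Y ω ∂P := by
    conv_lhs => rw [← hsplitT]
    rw [setIntegral_union (hdisj _) (hAt.inter hBf)
      (hYint.integrableOn) (hYint.integrableOn)]
  have hIf : ∫ ω in {x | Zi x = false}, Y ω ∂P
      = (∫ ω in {x | Zi x = false} ∩ {x | Zj x = true}, Y ω ∂P)
        + ∫ ω in {x | Zi x = false} ∩ {x | Zj x = false}, Y ω ∂P := by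
    conv_lhs => rw [← hsplitF]
    rw [setIntegral_union (hdisj _) (hAf.inter hBf)
      (hYint.integrableOn) (hYint.integrableOn)]
  -- conditional probabilities
  have hcondP : ∀ (A B : Set Ω), MeasurableSet A →
      ((P[|A]) B).toReal = (P A).toReal⁻¹ * (P (A ∩ B)).toReal := by
    intro A B hA
    rw [cond_apply hA, ENNReal.toReal_mul, ENNReal.toReal_inv]
  rw [integral_cond_eq, integral_cond_eq, integral_cond_eq, integral_cond_eq,
    integral_cond_eq, integral_cond_eq,
    hcondP _ _ hAt, hcondP _ _ hAt, hcondP _ _ hAf,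
    hIt, hIf, ← hqtt, ← hqtf, ← hqft, ← hqff, hPAt, hPAf]
  have h1 : qtt + qtf ≠ 0 := by positivity
  have h2 : qft + qff ≠ 0 := by positivity
  field_simp
  ring
end

section
/- Local average potential outcomes under one-sided noncompliance, part I: under Assumptions 1, 2 and 4, E[Y(0,0)] = E[Y | Z_i=0, Z_j=0]; E[Y(1,0) · 1_{C_i}] = E[Y · D_i | Z_i=1, Z_j=0]; and E[Y(0,1) · 1_{C_j}] = E[Y · D_j | Z_i=0, Z_j=1], where 1_A denotes the indicator of the event A (so, e.g., E[Y(1,0) · 1_{C_i}] = E[Y(1,0)|C_i] · P[C_i]). -/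
/-! On the cell `{Zᵢ = z, Zⱼ = z'}` the observed outcome is a fixed function, evaluated at
`(z, z')`, of the vector of all potential outcomes and potential treatments. As this vector is
independent of the instruments, conditioning on the cell leaves its law unchanged, so the
conditional expectation is the unconditional expectation of that function. One-sided
noncompliance then identifies it: at `(0, 0)` nobody is treated; at `(1, 0)` we have
`Dⱼ = Dⱼ(0, 1) = 0`, and `Dᵢ = Dᵢ(1, 0)` equals `1` exactly on the compliers because
`Dᵢ(0, 1) = 0`. -/

open MeasureTheory ProbabilityTheory

theorem Measurable.apply_of_countable {α ι γ : Type*} [MeasurableSpace α] [MeasurableSpace ι]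
    [MeasurableSpace γ] [Countable ι] [MeasurableSingletonClass ι] {g : α → ι → γ}
    (hg : Measurable g) {i : α → ι} (hi : Measurable i) : Measurable fun a => g a (i a) :=
  (measurable_from_prod_countable_left (f := fun p : α × ι => g p.1 p.2)
    fun j => (measurable_pi_apply j).comp hg).comp (measurable_id.prodMk hi)

namespace ProbabilityTheory

variable {Ω α β : Type*} [MeasurableSpace Ω] [MeasurableSpace α] [MeasurableSpace β]
  {P : Measure Ω} [IsFiniteMeasure P] {V : Ω → α} {W : Ω → β}

theorem IndepFun.map_cond_preimage_s6 (hVW : IndepFun V W P) (hV : Measurable V)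
    (hW : Measurable W) {s : Set β} (hs : MeasurableSet s) (hPs : P (W ⁻¹' s) ≠ 0) :
    (P[|W ⁻¹' s]).map V = P.map V := by
  ext t ht
  rw [Measure.map_apply hV ht, Measure.map_apply hV ht, cond_apply (hW hs), Set.inter_comm,
    hVW.measure_inter_preimage_eq_mul t s ht hs, mul_comm (P _),
    ENNReal.inv_mul_cancel_left hPs (measure_ne_top P _)]

theorem IndepFun.integral_cond_preimage_singleton (hVW : IndepFun V W P) (hV : Measurable V)
    (hW : Measurable W) [MeasurableSingletonClass β] {w : β} (hPw : P (W ⁻¹' {w}) ≠ 0)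
    {f : β → α → ℝ} (hf : Measurable (f w)) :
    ∫ ω, f (W ω) (V ω) ∂P[|W ⁻¹' {w}] = ∫ ω, f w (V ω) ∂P := by
  have hWw : MeasurableSet (W ⁻¹' {w}) := hW (measurableSet_singleton w)
  calc ∫ ω, f (W ω) (V ω) ∂P[|W ⁻¹' {w}] = ∫ ω, f w (V ω) ∂P[|W ⁻¹' {w}] := by
        refine integral_congr_ae ?_
        filter_upwards [ae_cond_mem hWw] with ω (hω : W ω = w)
        rw [hω]
    _ = ∫ a, f w a ∂(P[|W ⁻¹' {w}]).map V :=
        (integral_map hV.aemeasurable hf.aestronglyMeasurable).symm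
    _ = ∫ ω, f w (V ω) ∂P := by
        rw [hVW.map_cond_preimage_s6 hV hW (measurableSet_singleton w) hPw,
          integral_map hV.aemeasurable hf.aestronglyMeasurable]

end ProbabilityTheory

theorem stmt_6_general
    {Ω : Type*} [MeasurableSpace Ω] (P : Measure Ω) [IsProbabilityMeasure P]
    (Y : Bool → Bool → Ω → ℝ) (Di Dj : Bool → Bool → Ω → Bool)
    (Zi Zj : Ω → Bool)
    (hYmeas : ∀ d d', Measurable (Y d d'))
    (hDimeas : ∀ z z', Measurable (Di z z'))
    (hDjmeas : ∀ z z', Measurable (Dj z z'))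
    (hZi : Measurable Zi) (hZj : Measurable Zj)
    (hpos : ∀ z z', 0 < P ({x | Zi x = z} ∩ {x | Zj x = z'}))
    (hIV : IndepFun
      (fun ω => ((fun d d' => Y d d' ω),
                 (fun z z' => Di z z' ω),
                 (fun z z' => Dj z z' ω)))
      (fun ω => (Zi ω, Zj ω)) P)
    (hosn : ∀ᵐ ω ∂P,
      Di false false ω = false ∧ Di false true ω = false ∧
      Dj false false ω = false ∧ Dj false true ω = false)
    :
    (∫ ω, Y false false ω ∂P) = (∫ ω, (Y (Di (Zi ω) (Zj ω) ω) (Dj (Zj ω) (Zi ω) ω) ω) ∂(P[|({x | Zi x = false} ∩ {x | Zj x = false})]))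
    ∧ (∫ ω, Y true false ω * Set.indicator ({x | Di true false x = true ∧ Di false true x = false}) (fun _ => (1:ℝ)) ω ∂P) = (∫ ω, (Y (Di (Zi ω) (Zj ω) ω) (Dj (Zj ω) (Zi ω) ω) ω) * bInd (Di (Zi ω) (Zj ω) ω) ∂(P[|({x | Zi x = true} ∩ {x | Zj x = false})]))
    ∧ (∫ ω, Y false true ω * Set.indicator ({x | Dj true false x = true ∧ Dj false true x = false}) (fun _ => (1:ℝ)) ω ∂P) = (∫ ω, (Y (Di (Zi ω) (Zj ω) ω) (Dj (Zj ω) (Zi ω) ω) ω) * bInd (Dj (Zj ω) (Zi ω) ω) ∂(P[|({x | Zi x = false} ∩ {x | Zj x = true})])) := by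
  set V := fun ω => ((fun d d' => Y d d' ω), (fun z z' => Di z z' ω), (fun z z' => Dj z z' ω))
  set W := fun ω => (Zi ω, Zj ω)
  have hV : Measurable V := by fun_prop
  have hobs : ∀ z z', Measurable fun v : (Bool → Bool → ℝ) × (Bool → Bool → Bool) ×
      (Bool → Bool → Bool) => v.1 (v.2.1 z z') (v.2.2 z' z) := fun z z' =>
    (Measurable.apply_of_countable measurable_fst (by fun_prop)).apply_of_countable (by fun_prop)
  have hbInd : Measurable bInd := measurable_of_countable _
  have hcell : ∀ z z', {x | Zi x = z} ∩ {x | Zj x = z'} = W ⁻¹' {(z, z')} := fun z z' => by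
    ext; simp [W, Prod.ext_iff]
  have hcond : ∀ (f : Bool × Bool → _ → ℝ) z z', Measurable (f (z, z')) →
      ∫ ω, f (W ω) (V ω) ∂P[|{x | Zi x = z} ∩ {x | Zj x = z'}] = ∫ ω, f (z, z') (V ω) ∂P :=
    fun f z z' hf => by
      rw [hcell]
      exact hIV.integral_cond_preimage_singleton hV (hZi.prodMk hZj) (hcell z z' ▸ (hpos z z').ne') hf
  refine ⟨?_, ?_, ?_⟩
  · rw [hcond (fun w v => v.1 (v.2.1 w.1 w.2) (v.2.2 w.2 w.1)) false false (hobs _ _)]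
    refine integral_congr_ae ?_
    filter_upwards [hosn] with ω h
    simp [V, h]
  · rw [hcond (fun w v => v.1 (v.2.1 w.1 w.2) (v.2.2 w.2 w.1) * bInd (v.2.1 w.1 w.2)) true false
      ((hobs _ _).mul (hbInd.comp (by fun_prop)))]
    refine integral_congr_ae ?_
    filter_upwards [hosn] with ω h
    cases hD : Di true false ω <;> simp [V, h, hD, bInd]
  · rw [hcond (fun w v => v.1 (v.2.1 w.1 w.2) (v.2.2 w.2 w.1) * bInd (v.2.2 w.2 w.1)) false true
      ((hobs _ _).mul (hbInd.comp (by fun_prop)))]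
    refine integral_congr_ae ?_
    filter_upwards [hosn] with ω h
    cases hD : Dj true false ω <;> simp [V, h, hD, bInd]

theorem stmt_6
    {Ω : Type*} [MeasurableSpace Ω] (P : Measure Ω) [IsProbabilityMeasure P]
    (Y : Bool → Bool → Ω → ℝ) (Di Dj : Bool → Bool → Ω → Bool)
    (Zi Zj : Ω → Bool)
    (hYmeas : ∀ d d', Measurable (Y d d'))
    (hYint : ∀ d d', Integrable (Y d d') P)
    (hDimeas : ∀ z z', Measurable (Di z z'))
    (hDjmeas : ∀ z z', Measurable (Dj z z'))
    (hZi : Measurable Zi) (hZj : Measurable Zj)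
    (hpos : ∀ z z', 0 < P ({x | Zi x = z} ∩ {x | Zj x = z'}))
    (hIV : IndepFun
      (fun ω => ((fun d d' => Y d d' ω),
                 (fun z z' => Di z z' ω),
                 (fun z z' => Dj z z' ω)))
      (fun ω => (Zi ω, Zj ω)) P)
    (hmono : ∀ᵐ ω ∂P,
      (Di false false ω ≤ Di false true ω ∧ Di false true ω ≤ Di true false ω ∧
        Di true false ω ≤ Di true true ω) ∧
      (Dj false false ω ≤ Dj false true ω ∧ Dj false true ω ≤ Dj true false ω ∧
        Dj true false ω ≤ Dj true true ω))
    (hosn : ∀ᵐ ω ∂P,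
      Di false false ω = false ∧ Di false true ω = false ∧
      Dj false false ω = false ∧ Dj false true ω = false)
    :
    (∫ ω, Y false false ω ∂P) = (∫ ω, (Y (Di (Zi ω) (Zj ω) ω) (Dj (Zj ω) (Zi ω) ω) ω) ∂(P[|({x | Zi x = false} ∩ {x | Zj x = false})]))
    ∧ (∫ ω, Y true false ω * Set.indicator ({x | Di true false x = true ∧ Di false true x = false}) (fun _ => (1:ℝ)) ω ∂P) = (∫ ω, (Y (Di (Zi ω) (Zj ω) ω) (Dj (Zj ω) (Zi ω) ω) ω) * bInd (Di (Zi ω) (Zj ω) ω) ∂(P[|({x | Zi x = true} ∩ {x | Zj x = false})]))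
    ∧ (∫ ω, Y false true ω * Set.indicator ({x | Dj true false x = true ∧ Dj false true x = false}) (fun _ => (1:ℝ)) ω ∂P) = (∫ ω, (Y (Di (Zi ω) (Zj ω) ω) (Dj (Zj ω) (Zi ω) ω) ω) * bInd (Dj (Zj ω) (Zi ω) ω) ∂(P[|({x | Zi x = false} ∩ {x | Zj x = true})])) :=
  stmt_6_general P Y Di Dj Zi Zj hYmeas hDimeas hDjmeas hZi hZj hpos hIV hosn
end

section
/- Naive 2SLS estimand ignoring spillovers: suppose, in addition to Assumptions 1, 2 and 4, that P[Z_i=1, Z_j=1] = 0 while P[Z_i=1, Z_j=0] > 0, P[Z_i=0, Z_j=1] > 0, P[Z_i=0, Z_j=0] > 0, and that P[C_i] = P[C_j] > 0 (identically distributed units within the pair). Then (E[Y | Z_i=1] − E[Y | Z_i=0]) / E[D_i | Z_i=1] = E[Y(1,0) − Y(0,0) | C_i] − E[Y(0,1) − Y(0,0) | C_j] · P[Z_j=1 | Z_i=0]. -/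
/-!
On `{Z_i = 1}` we have `Z_j = 0` almost surely, so under one-sided noncompliance the observed
outcome is `Y(D_i(1,0), 0)`; on `{Z_i = 0}` it is `Y(0, D_j(1,0))` or `Y(0,0)` according to `Z_j`.
Independence of the instruments turns each conditional mean into an unconditional one, so
`E[Y | Z_i=1] - E[Y | Z_i=0]` equals `(E Y(D_i(1,0),0) - E Y(0,0))` minus
`P[Z_j=1 | Z_i=0] (E Y(0,D_j(1,0)) - E Y(0,0))`. Each bracket is the complier effect times the
complier share, and the first stage `E[D_i | Z_i=1] = P[D_i(1,0)=1]` is that same share.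
-/

open MeasureTheory ProbabilityTheory

lemma measurableSet_setOf_eq {α γ : Type*} [MeasurableSpace α] [MeasurableSpace γ]
    [MeasurableSingletonClass γ] {f : α → γ} (hf : Measurable f) (c : γ) :
    MeasurableSet {x | f x = c} :=
  hf (measurableSet_singleton c)

namespace ProbabilityTheory

variable {Ω β : Type*} [MeasurableSpace Ω] [MeasurableSpace β] {P : Measure Ω}

lemma setIntegral_cond {s t : Set Ω} (ht : MeasurableSet t) (f : Ω → ℝ) :
    ∫ ω in t, f ω ∂P[|s] = (P s).toReal⁻¹ * ∫ ω in s ∩ t, f ω ∂P := by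
  rw [ProbabilityTheory.cond, Measure.restrict_smul, integral_smul_measure, smul_eq_mul,
    Measure.restrict_restrict ht, Set.inter_comm, ENNReal.toReal_inv]

lemma _root_.MeasureTheory.Integrable.cond {s : Set Ω} {f : Ω → ℝ} (hf : Integrable f P)
    (hs : P s ≠ 0) : Integrable f P[|s] :=
  hf.restrict.smul_measure (ENNReal.inv_ne_top.mpr hs)

lemma integral_cond_sub_eq_div {S C : Set Ω} [DecidablePred (· ∈ S)] (hS : MeasurableSet S)
    (hCS : C =ᵐ[P] S) {a b : Ω → ℝ} (ha : Integrable a P) (hb : Integrable b P) :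
    ∫ ω, (a ω - b ω) ∂P[|C] = (∫ ω, S.piecewise a b ω ∂P - ∫ ω, b ω ∂P) / P.real S := by
  rw [← setIntegral_univ, setIntegral_cond MeasurableSet.univ, Set.inter_univ,
    setIntegral_congr_set hCS, measure_congr hCS, integral_piecewise hS ha.integrableOn
    hb.integrableOn, integral_sub ha.integrableOn hb.integrableOn, ← integral_add_compl hS hb,
    measureReal_def]
  ring

variable {X : Ω → ℝ} {V : Ω → β}

lemma IndepFun.setIntegral_preimage_eq_mul (hXV : IndepFun X V P) (hV : Measurable V)
    (hX : AEStronglyMeasurable X P) {T : Set β} (hT : MeasurableSet T) :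
    ∫ ω in V ⁻¹' T, X ω ∂P = P.real (V ⁻¹' T) * ∫ ω, X ω ∂P :=
  ((IndepFun_iff_Indep _ _ _).1 hXV.symm).setIntegral_eq_mul (f := id) hV.comap_le
    hX.aemeasurable ⟨T, hT, rfl⟩ aestronglyMeasurable_id

lemma IndepFun.setIntegral_cond_preimage_eq_mul (hXV : IndepFun X V P) (hV : Measurable V)
    (hX : AEStronglyMeasurable X P) {T T' : Set β} (hT : MeasurableSet T)
    (hT' : MeasurableSet T') :
    ∫ ω in V ⁻¹' T', X ω ∂P[|V ⁻¹' T] = (P[|V ⁻¹' T]).real (V ⁻¹' T') * ∫ ω, X ω ∂P := by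
  rw [setIntegral_cond (hV hT'), ← Set.preimage_inter,
    hXV.setIntegral_preimage_eq_mul hV hX (hT.inter hT'), measureReal_def, measureReal_def,
    cond_apply (hV hT), ENNReal.toReal_mul, ENNReal.toReal_inv, Set.preimage_inter]
  ring

lemma IndepFun.integral_cond_preimage_s14 [IsFiniteMeasure P] (hXV : IndepFun X V P)
    (hV : Measurable V) (hX : AEStronglyMeasurable X P) {T : Set β} (hT : MeasurableSet T)
    (hPT : P (V ⁻¹' T) ≠ 0) :
    ∫ ω, X ω ∂P[|V ⁻¹' T] = ∫ ω, X ω ∂P := by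
  have := cond_isProbabilityMeasure hPT
  simpa using hXV.setIntegral_cond_preimage_eq_mul hV hX hT MeasurableSet.univ

lemma integral_cond_piecewise_preimage {X' : Ω → ℝ} (hXV : IndepFun X V P)
    (hX'V : IndepFun X' V P) (hV : Measurable V) (hX : Integrable X P) (hX' : Integrable X' P)
    {T T' : Set β} [DecidablePred (· ∈ V ⁻¹' T')] (hT : MeasurableSet T)
    (hT' : MeasurableSet T') (hPT : P (V ⁻¹' T) ≠ 0) :
    ∫ ω, (V ⁻¹' T').piecewise X X' ω ∂P[|V ⁻¹' T] =
      (P[|V ⁻¹' T]).real (V ⁻¹' T') * ∫ ω, X ω ∂P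
        + (P[|V ⁻¹' T]).real (V ⁻¹' T')ᶜ * ∫ ω, X' ω ∂P := by
  rw [integral_piecewise (hV hT') (hX.cond hPT).integrableOn (hX'.cond hPT).integrableOn,
    hXV.setIntegral_cond_preimage_eq_mul hV hX.aestronglyMeasurable hT hT', ← Set.preimage_compl,
    hX'V.setIntegral_cond_preimage_eq_mul hV hX'.aestronglyMeasurable hT hT'.compl]

end ProbabilityTheory

section PairedInstruments

variable {Ω : Type*} [MeasurableSpace Ω] {P : Measure Ω} {Y : Bool → Bool → Ω → ℝ}
  {Di Dj : Bool → Bool → Ω → Bool} {Zi Zj : Ω → Bool}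

abbrev PotentialValues := (Bool → Bool → ℝ) × (Bool → Bool → Bool) × (Bool → Bool → Bool)

def potentialVariables (Y : Bool → Bool → Ω → ℝ) (Di Dj : Bool → Bool → Ω → Bool) (ω : Ω) :
    PotentialValues :=
  (fun d d' => Y d d' ω, fun z z' => Di z z' ω, fun z z' => Dj z z' ω)

lemma complier_ae_eq {D : Bool → Bool → Ω → Bool} (hD : ∀ᵐ ω ∂P, D false true ω = false) :
    {x | D true false x = true ∧ D false true x = false} =ᵐ[P] {x | D true false x = true} := by
  rw [Filter.eventuallyEq_set]
  filter_upwards [hD] with ω hω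
  simp [hω]

lemma ae_cond_Zi_true (hZi : Measurable Zi)
    (h11 : P ({x | Zi x = true} ∩ {x | Zj x = true}) = 0) :
    ∀ᵐ ω ∂P[|{x | Zi x = true}], Zi ω = true ∧ Zj ω = false := by
  have hZi1 : MeasurableSet {x | Zi x = true} := measurableSet_setOf_eq hZi true
  have hZj : P[|{x | Zi x = true}] {x | Zj x = true} = 0 := by
    rw [cond_apply hZi1, h11, mul_zero]
  filter_upwards [ae_cond_mem hZi1, measure_eq_zero_iff_ae_notMem.1 hZj] with ω h1 h2
  exact ⟨h1, by simpa using h2⟩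

variable [IsFiniteMeasure P]

lemma integral_outcome_cond_Zi_true (hZi : Measurable Zi) (hZj : Measurable Zj)
    (hIV : IndepFun (potentialVariables Y Di Dj) (fun ω => (Zi ω, Zj ω)) P)
    (h11 : P ({x | Zi x = true} ∩ {x | Zj x = true}) = 0) (hZi1 : P {x | Zi x = true} ≠ 0)
    (hDi : Measurable (Di true false)) (hDj : ∀ᵐ ω ∂P, Dj false true ω = false)
    (hY10 : Integrable (Y true false) P) (hY00 : Integrable (Y false false) P) :
    ∫ ω, Y (Di (Zi ω) (Zj ω) ω) (Dj (Zj ω) (Zi ω) ω) ω ∂P[|{x | Zi x = true}] =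
      ∫ ω, {x | Di true false x = true}.piecewise (Y true false) (Y false false) ω ∂P := by
  have hind : IndepFun ({x | Di true false x = true}.piecewise (Y true false) (Y false false))
      (fun ω => (Zi ω, Zj ω)) P :=
    hIV.comp (φ := fun w : PotentialValues =>
        if w.2.1 true false then w.1 true false else w.1 false false)
      (.ite (measurableSet_eq_fun (by fun_prop) (by fun_prop)) (by fun_prop) (by fun_prop))
      measurable_id
  have hint := Integrable.piecewise (measurableSet_setOf_eq hDi true)
    hY10.integrableOn hY00.integrableOn
  rw [← hind.integral_cond_preimage_s14 (hZi.prodMk hZj) hint.aestronglyMeasurable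
    (T := {p | p.1 = true}) (measurable_fst (measurableSet_singleton true)) hZi1]
  refine integral_congr_ae ?_
  filter_upwards [ae_cond_Zi_true hZi h11, cond_absolutelyContinuous.ae_le hDj]
    with ω ⟨h1, h2⟩ h3
  cases h : Di true false ω <;> simp [h1, h2, h3, h, Set.piecewise]

lemma integral_treatment_cond_Zi_true (hZi : Measurable Zi) (hZj : Measurable Zj)
    (hIV : IndepFun (potentialVariables Y Di Dj) (fun ω => (Zi ω, Zj ω)) P)
    (h11 : P ({x | Zi x = true} ∩ {x | Zj x = true}) = 0) (hZi1 : P {x | Zi x = true} ≠ 0)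
    (hDi : Measurable (Di true false)) :
    ∫ ω, bInd (Di (Zi ω) (Zj ω) ω) ∂P[|{x | Zi x = true}] =
      P.real {x | Di true false x = true} := by
  have hind : IndepFun (fun ω => bInd (Di true false ω)) (fun ω => (Zi ω, Zj ω)) P :=
    hIV.comp (φ := fun w : PotentialValues => bInd (w.2.1 true false)) (by fun_prop)
      measurable_id
  have hindicator :
      (fun ω => bInd (Di true false ω)) = {x | Di true false x = true}.indicator 1 := by
    funext ω
    cases h : Di true false ω <;> simp [bInd, h]
  calc ∫ ω, bInd (Di (Zi ω) (Zj ω) ω) ∂P[|{x | Zi x = true}]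
      = ∫ ω, bInd (Di true false ω) ∂P[|{x | Zi x = true}] := by
        refine integral_congr_ae ?_
        filter_upwards [ae_cond_Zi_true hZi h11] with ω ⟨h1, h2⟩
        rw [h1, h2]
    _ = ∫ ω, bInd (Di true false ω) ∂P :=
        hind.integral_cond_preimage_s14 (hZi.prodMk hZj) (by fun_prop) (T := {p | p.1 = true})
          (measurable_fst (measurableSet_singleton true)) hZi1
    _ = P.real {x | Di true false x = true} := by
        rw [hindicator, integral_indicator_one (measurableSet_setOf_eq hDi true)]

lemma integral_outcome_cond_Zi_false (hZi : Measurable Zi) (hZj : Measurable Zj)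
    (hIV : IndepFun (potentialVariables Y Di Dj) (fun ω => (Zi ω, Zj ω)) P)
    (hZi0 : P {x | Zi x = false} ≠ 0) (hDj : Measurable (Dj true false))
    (hD : ∀ᵐ ω ∂P, Di false false ω = false ∧ Di false true ω = false ∧ Dj false false ω = false)
    (hY01 : Integrable (Y false true) P) (hY00 : Integrable (Y false false) P) :
    ∫ ω, Y (Di (Zi ω) (Zj ω) ω) (Dj (Zj ω) (Zi ω) ω) ω ∂P[|{x | Zi x = false}] =
      (P[|{x | Zi x = false}]).real {x | Zj x = true} *
          ∫ ω, {x | Dj true false x = true}.piecewise (Y false true) (Y false false) ω ∂P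
        + (1 - (P[|{x | Zi x = false}]).real {x | Zj x = true}) * ∫ ω, Y false false ω ∂P := by
  classical
  have := cond_isProbabilityMeasure hZi0
  have hind : IndepFun ({x | Dj true false x = true}.piecewise (Y false true) (Y false false))
      (fun ω => (Zi ω, Zj ω)) P :=
    hIV.comp (φ := fun w : PotentialValues =>
        if w.2.2 true false then w.1 false true else w.1 false false)
      (.ite (measurableSet_eq_fun (by fun_prop) (by fun_prop)) (by fun_prop) (by fun_prop))
      measurable_id
  have hind0 : IndepFun (Y false false) (fun ω => (Zi ω, Zj ω)) P :=
    hIV.comp (φ := fun w : PotentialValues => w.1 false false) (by fun_prop) measurable_id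
  have hint := Integrable.piecewise (measurableSet_setOf_eq hDj true)
    hY01.integrableOn hY00.integrableOn
  rw [← probReal_compl_eq_one_sub (measurableSet_setOf_eq hZj true)]
  refine (integral_congr_ae ?_).trans (integral_cond_piecewise_preimage hind hind0
    (hZi.prodMk hZj) hint hY00 (T := {p | p.1 = false}) (T' := {p | p.2 = true})
    (measurable_fst (measurableSet_singleton false))
    (measurable_snd (measurableSet_singleton true)) hZi0)
  filter_upwards [ae_cond_mem (measurableSet_setOf_eq hZi false),
    cond_absolutelyContinuous.ae_le hD] with ω h1 ⟨h2, h3, h4⟩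
  cases hz : Zj ω <;> cases h : Dj true false ω <;> simp_all [Set.piecewise]

end PairedInstruments

theorem stmt_14_general
    {Ω : Type*} [MeasurableSpace Ω] (P : Measure Ω) [IsProbabilityMeasure P]
    (Y : Bool → Bool → Ω → ℝ) (Di Dj : Bool → Bool → Ω → Bool)
    (Zi Zj : Ω → Bool)
    (hYint : ∀ d d', Integrable (Y d d') P)
    (hDimeas : ∀ z z', Measurable (Di z z'))
    (hDjmeas : ∀ z z', Measurable (Dj z z'))
    (hZi : Measurable Zi) (hZj : Measurable Zj)
    (h11 : P ({x | Zi x = true} ∩ {x | Zj x = true}) = 0)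
    (h10 : 0 < P ({x | Zi x = true} ∩ {x | Zj x = false}))
    (h00 : 0 < P ({x | Zi x = false} ∩ {x | Zj x = false}))
    (hIV : IndepFun
      (fun ω => ((fun d d' => Y d d' ω),
                 (fun z z' => Di z z' ω),
                 (fun z z' => Dj z z' ω)))
      (fun ω => (Zi ω, Zj ω)) P)
    (hosn : ∀ᵐ ω ∂P,
      Di false false ω = false ∧ Di false true ω = false ∧
      Dj false false ω = false ∧ Dj false true ω = false)
    (hCC : P ({x | Di true false x = true ∧ Di false true x = false}) = P ({x | Dj true false x = true ∧ Dj false true x = false}))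
    :
    ((∫ ω, (Y (Di (Zi ω) (Zj ω) ω) (Dj (Zj ω) (Zi ω) ω) ω) ∂(P[|{x | Zi x = true}])) - (∫ ω, (Y (Di (Zi ω) (Zj ω) ω) (Dj (Zj ω) (Zi ω) ω) ω) ∂(P[|{x | Zi x = false}])))
      / (∫ ω, bInd (Di (Zi ω) (Zj ω) ω) ∂(P[|{x | Zi x = true}]))
    = (∫ ω, (Y true false ω - Y false false ω) ∂(P[|{x | Di true false x = true ∧ Di false true x = false}]))
      - (∫ ω, (Y false true ω - Y false false ω) ∂(P[|{x | Dj true false x = true ∧ Dj false true x = false}]))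
        * ((P[|{x | Zi x = false}]) {x | Zj x = true}).toReal := by
  have hZi1 : P {x | Zi x = true} ≠ 0 := (h10.trans_le (measure_mono Set.inter_subset_left)).ne'
  have hZi0 : P {x | Zi x = false} ≠ 0 := (h00.trans_le (measure_mono Set.inter_subset_left)).ne'
  have hCi := complier_ae_eq (hosn.mono fun _ h => h.2.1)
  have hCj := complier_ae_eq (hosn.mono fun _ h => h.2.2.2)
  have hSj : P.real {x | Dj true false x = true} = P.real {x | Di true false x = true} := by
    rw [measureReal_def, measureReal_def, ← measure_congr hCi, ← measure_congr hCj, hCC]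
  rw [integral_outcome_cond_Zi_true hZi hZj hIV h11 hZi1 (hDimeas true false)
      (hosn.mono fun _ h => h.2.2.2) (hYint true false) (hYint false false),
    integral_treatment_cond_Zi_true hZi hZj hIV h11 hZi1 (hDimeas true false),
    integral_outcome_cond_Zi_false hZi hZj hIV hZi0 (hDjmeas true false)
      (hosn.mono fun _ h => ⟨h.1, h.2.1, h.2.2.1⟩) (hYint false true) (hYint false false),
    integral_cond_sub_eq_div (measurableSet_setOf_eq (hDimeas true false) true) hCi
      (hYint true false) (hYint false false),
    integral_cond_sub_eq_div (measurableSet_setOf_eq (hDjmeas true false) true) hCj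
      (hYint false true) (hYint false false),
    hSj, ← measureReal_def]
  ring

theorem stmt_14
    {Ω : Type*} [MeasurableSpace Ω] (P : Measure Ω) [IsProbabilityMeasure P]
    (Y : Bool → Bool → Ω → ℝ) (Di Dj : Bool → Bool → Ω → Bool)
    (Zi Zj : Ω → Bool)
    (hYmeas : ∀ d d', Measurable (Y d d'))
    (hYint : ∀ d d', Integrable (Y d d') P)
    (hDimeas : ∀ z z', Measurable (Di z z'))
    (hDjmeas : ∀ z z', Measurable (Dj z z'))
    (hZi : Measurable Zi) (hZj : Measurable Zj)
    (h11 : P ({x | Zi x = true} ∩ {x | Zj x = true}) = 0)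
    (h10 : 0 < P ({x | Zi x = true} ∩ {x | Zj x = false}))
    (h01 : 0 < P ({x | Zi x = false} ∩ {x | Zj x = true}))
    (h00 : 0 < P ({x | Zi x = false} ∩ {x | Zj x = false}))
    (hIV : IndepFun
      (fun ω => ((fun d d' => Y d d' ω),
                 (fun z z' => Di z z' ω),
                 (fun z z' => Dj z z' ω)))
      (fun ω => (Zi ω, Zj ω)) P)
    (hmono : ∀ᵐ ω ∂P,
      (Di false false ω ≤ Di false true ω ∧ Di false true ω ≤ Di true false ω ∧
        Di true false ω ≤ Di true true ω) ∧
      (Dj false false ω ≤ Dj false true ω ∧ Dj false true ω ≤ Dj true false ω ∧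
        Dj true false ω ≤ Dj true true ω))
    (hosn : ∀ᵐ ω ∂P,
      Di false false ω = false ∧ Di false true ω = false ∧
      Dj false false ω = false ∧ Dj false true ω = false)
    (hCC : P ({x | Di true false x = true ∧ Di false true x = false}) = P ({x | Dj true false x = true ∧ Dj false true x = false}))
    (hC : 0 < P ({x | Di true false x = true ∧ Di false true x = false}))
    :
    ((∫ ω, (Y (Di (Zi ω) (Zj ω) ω) (Dj (Zj ω) (Zi ω) ω) ω) ∂(P[|{x | Zi x = true}])) - (∫ ω, (Y (Di (Zi ω) (Zj ω) ω) (Dj (Zj ω) (Zi ω) ω) ω) ∂(P[|{x | Zi x = false}])))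
      / (∫ ω, bInd (Di (Zi ω) (Zj ω) ω) ∂(P[|{x | Zi x = true}]))
    = (∫ ω, (Y true false ω - Y false false ω) ∂(P[|{x | Di true false x = true ∧ Di false true x = false}]))
      - (∫ ω, (Y false true ω - Y false false ω) ∂(P[|{x | Dj true false x = true ∧ Dj false true x = false}]))
        * ((P[|{x | Zi x = false}]) {x | Zj x = true}).toReal :=
  stmt_14_general P Y Di Dj Zi Zj hYint hDimeas hDjmeas hZi hZj h11 h10 h00 hIV hosn hCC
end

section
/- Identification with covariates by inverse propensity weighting: let X : Ω → ℝ^k be a measurable covariate vector with generated σ-algebra 𝔪 = σ(X), and suppose: (i) the collection of all potential outcomes (Y(d,d'))_{d,d'} and potential treatment statuses (D_i(z,z'), D_j(z,z'))_{z,z'} is conditionally independent of (Z_i,Z_j) given 𝔪; (ii) almost surely D_k(1,1) ≥ D_k(1,0) ≥ D_k(0,1) ≥ D_k(0,0) and D_k(0,0) = D_k(0,1) = 0 for k ∈ {i,j}; (iii) for each (z,z') ∈ {0,1}², p_{zz'} : Ω → ℝ is an 𝔪-measurable function with p_{zz'} = E[1{Z_i=z, Z_j=z'} | 𝔪] almost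 surely and p_{zz'} > 0 almost surely. Let g : ℝ × ℝ^k → ℝ be measurable such that all random variables below are integrable. Then: E[ g(Y,X) · (1−Z_i)(1−Z_j) / p_{00} ] = E[ g(Y(0,0), X) ]; E[ g(Y,X) · D_i · Z_i(1−Z_j) / p_{10} ] = E[ g(Y(1,0), X) · 1_{C_i} ]; and E[ g(Y,X) · D_j · (1−Z_i)Z_j / p_{01} ] = E[ g(Y(0,1), X) · 1_{C_j} ], where 1_A denotes the indicator of the event A. -/
/-!
Let `V` collect all potential outcomes and treatments and let `B = {Z_i = z, Z_j = z'}`.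
Conditional independence of `V` and `(Z_i, Z_j)` given `𝔪` upgrades `p_{zz'} = E[1_B | 𝔪]` to
`p_{zz'} = E[1_B | σ(V) ⊔ 𝔪]`: both sides have the same integral over every `A ∩ C` with
`A ∈ σ(V)`, `C ∈ 𝔪`, and these sets form a π-system generating `σ(V) ⊔ 𝔪`.
Since `D_k(0,0) = D_k(0,1) = 0` a.s., each weighted integrand equals `H / p_{zz'} · 1_B` a.s.,
where `H` is the right-hand integrand, a function of `(V, X)` and hence `σ(V) ⊔ 𝔪`-measurable.
Pulling `H / p_{zz'}` out of `E[· | σ(V) ⊔ 𝔪]` leaves `E[H / p_{zz'} · p_{zz'}] = E[H]`.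
-/

open MeasureTheory ProbabilityTheory

section
variable {α : Type*}

lemma isPiSystem_image2_inter_measurableSet (m₁ m₂ : MeasurableSpace α) :
    IsPiSystem (Set.image2 (· ∩ ·) {s | MeasurableSet[m₁] s} {t | MeasurableSet[m₂] t}) := by
  rintro _ ⟨s₁, hs₁, t₁, ht₁, rfl⟩ _ ⟨s₂, hs₂, t₂, ht₂, rfl⟩ -
  exact ⟨s₁ ∩ s₂, hs₁.inter hs₂, t₁ ∩ t₂, ht₁.inter ht₂, Set.inter_inter_inter_comm s₁ s₂ t₁ t₂⟩

lemma sup_eq_generateFrom_image2_inter (m₁ m₂ : MeasurableSpace α) :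
    m₁ ⊔ m₂ = MeasurableSpace.generateFrom
      (Set.image2 (· ∩ ·) {s | MeasurableSet[m₁] s} {t | MeasurableSet[m₂] t}) := by
  refine le_antisymm (sup_le ?_ ?_) (MeasurableSpace.generateFrom_le ?_)
  · exact fun s hs => MeasurableSpace.measurableSet_generateFrom
      ⟨s, hs, .univ, @MeasurableSet.univ _ m₂, Set.inter_univ s⟩
  · exact fun t ht => MeasurableSpace.measurableSet_generateFrom
      ⟨.univ, @MeasurableSet.univ _ m₁, t, ht, Set.univ_inter t⟩
  · rintro _ ⟨s, hs, t, ht, rfl⟩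
    exact (le_sup_left (a := m₁) (b := m₂) s hs).inter (le_sup_right (a := m₁) (b := m₂) t ht)

lemma setIntegral_eq_of_isPiSystem {E : Type*} [NormedAddCommGroup E] [NormedSpace ℝ E]
    {m m₀ : MeasurableSpace α} {μ : Measure α} (hm : m ≤ m₀)
    {S : Set (Set α)} (hgen : m = MeasurableSpace.generateFrom S) (hS : IsPiSystem S)
    {f g : α → E} (hf : Integrable f μ) (hg : Integrable g μ)
    (huniv : ∫ x, f x ∂μ = ∫ x, g x ∂μ) (hbasic : ∀ s ∈ S, ∫ x in s, f x ∂μ = ∫ x in s, g x ∂μ)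
    {s : Set α} (hs : MeasurableSet[m] s) : ∫ x in s, f x ∂μ = ∫ x in s, g x ∂μ := by
  induction s, hs using MeasurableSpace.induction_on_inter hgen hS with
  | empty => simp
  | basic t ht => exact hbasic t ht
  | compl t ht iht =>
    rw [← add_right_inj (∫ x in t, f x ∂μ), integral_add_compl (hm t ht) hf, iht,
      integral_add_compl (hm t ht) hg, huniv]
  | iUnion t htd ht iht =>
    rw [integral_iUnion (fun i => hm _ (ht i)) htd hf.integrableOn,
      integral_iUnion (fun i => hm _ (ht i)) htd hg.integrableOn]
    exact tsum_congr iht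

end

lemma integral_div_mul_indicator_of_ae_eq_condExp {Ω : Type*} {n mΩ : MeasurableSpace Ω}
    {μ : Measure Ω} [IsFiniteMeasure μ] (hn : n ≤ mΩ) {B : Set Ω} (hB : MeasurableSet B)
    {p H : Ω → ℝ} (hp : Measurable[n] p) (hpB : p =ᵐ[μ] μ⟦B | n⟧) (hp0 : ∀ᵐ ω ∂μ, p ω ≠ 0)
    (hH : Measurable[n] H)
    (hint : Integrable (fun ω => H ω / p ω * B.indicator (fun _ => (1 : ℝ)) ω) μ) :
    ∫ ω, H ω / p ω * B.indicator (fun _ => (1 : ℝ)) ω ∂μ = ∫ ω, H ω ∂μ := by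
  have hpull : μ[(fun ω => H ω / p ω) * B.indicator (fun _ => (1 : ℝ)) | n]
      =ᵐ[μ] (fun ω => H ω / p ω) * μ⟦B | n⟧ :=
    condExp_mul_of_stronglyMeasurable_left (hH.div hp).stronglyMeasurable hint
      ((integrable_const 1).indicator hB)
  calc ∫ ω, H ω / p ω * B.indicator (fun _ => (1 : ℝ)) ω ∂μ
      = ∫ ω, (μ[(fun ω => H ω / p ω) * B.indicator (fun _ => (1 : ℝ)) | n]) ω ∂μ :=
        (integral_condExp hn (μ := μ)
          (f := (fun ω => H ω / p ω) * B.indicator (fun _ => (1 : ℝ)))).symm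
    _ = ∫ ω, H ω ∂μ := by
        refine integral_congr_ae ?_
        filter_upwards [hpull, hpB, hp0] with ω h1 h2 h3
        rw [h1, Pi.mul_apply, ← h2, div_mul_cancel₀ _ h3]

section
variable {Ω : Type*} {m' m₁ m₂ mΩ : MeasurableSpace Ω} [StandardBorelSpace Ω] {μ : Measure Ω}
  [IsFiniteMeasure μ] {hm' : m' ≤ mΩ}

lemma CondIndep.setIntegral_condExp_indicator_inter (hm₁ : m₁ ≤ mΩ) (hm₂ : m₂ ≤ mΩ)
    (h : CondIndep m' m₁ m₂ hm' μ) {A B C : Set Ω} (hA : MeasurableSet[m₁] A)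
    (hB : MeasurableSet[m₂] B) (hC : MeasurableSet[m'] C) :
    ∫ x in A ∩ C, (μ⟦B | m'⟧) x ∂μ = ∫ x in A ∩ C, B.indicator (fun _ => (1 : ℝ)) x ∂μ := by
  have hA' := hm₁ A hA
  have hB' := hm₂ B hB
  have hInd : ∀ {s : Set Ω}, MeasurableSet[mΩ] s →
      Integrable (s.indicator fun _ => (1 : ℝ)) μ :=
    fun hs => (integrable_const 1).indicator hs
  have hmul : μ⟦B | m'⟧ * A.indicator (fun _ => (1 : ℝ)) = A.indicator (μ⟦B | m'⟧) := by
    ext x; by_cases hx : x ∈ A <;> simp [hx]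
  have hpull : μ[μ⟦B | m'⟧ * A.indicator (fun _ => (1 : ℝ)) | m'] =ᵐ[μ] μ⟦B | m'⟧ * μ⟦A | m'⟧ :=
    condExp_mul_of_stronglyMeasurable_left stronglyMeasurable_condExp
      (hmul ▸ integrable_condExp.indicator hA') (hInd hA')
  calc ∫ x in A ∩ C, (μ⟦B | m'⟧) x ∂μ
      = ∫ x in C, (μ[μ⟦B | m'⟧ * A.indicator (fun _ => (1 : ℝ)) | m']) x ∂μ := by
        rw [setIntegral_condExp hm' (hmul ▸ integrable_condExp.indicator hA') hC, hmul,
          setIntegral_indicator hA', Set.inter_comm]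
    _ = ∫ x in C, (μ⟦A ∩ B | m'⟧) x ∂μ := by
        refine setIntegral_congr_ae (hm' C hC) ?_
        filter_upwards [hpull, (condIndep_iff _ _ _ hm' hm₁ hm₂ μ).1 h A B hA hB] with x h1 h2 _
        rw [h1, h2, Pi.mul_apply, Pi.mul_apply, mul_comm]
    _ = ∫ x in A ∩ C, B.indicator (fun _ => (1 : ℝ)) x ∂μ := by
        rw [setIntegral_condExp hm' (hInd (hA'.inter hB')) hC, Set.inter_comm A C,
          ← setIntegral_indicator hA', ← Set.indicator_indicator]

lemma CondIndep.condExp_indicator_sup_ae_eq (hm₁ : m₁ ≤ mΩ) (hm₂ : m₂ ≤ mΩ)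
    (h : CondIndep m' m₁ m₂ hm' μ) {B : Set Ω} (hB : MeasurableSet[m₂] B) :
    μ⟦B | m₁ ⊔ m'⟧ =ᵐ[μ] μ⟦B | m'⟧ := by
  have hB1 : Integrable (B.indicator fun _ => (1 : ℝ)) μ :=
    (integrable_const 1).indicator (hm₂ B hB)
  refine (ae_eq_condExp_of_forall_setIntegral_eq (sup_le hm₁ hm') hB1
    (fun _ _ _ => integrable_condExp.integrableOn) (fun s hs _ => ?_)
    (stronglyMeasurable_condExp.mono (le_sup_right : m' ≤ m₁ ⊔ m')).aestronglyMeasurable).symm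
  refine setIntegral_eq_of_isPiSystem (sup_le hm₁ hm') (sup_eq_generateFrom_image2_inter m₁ m')
    (isPiSystem_image2_inter_measurableSet m₁ m') integrable_condExp hB1 (integral_condExp hm')
    ?_ hs
  rintro _ ⟨A, hA, C, hC, rfl⟩
  exact CondIndep.setIntegral_condExp_indicator_inter hm₁ hm₂ h hA hB hC

lemma CondIndep.integral_eq_of_ae_eq_div_mul_indicator (hm₁ : m₁ ≤ mΩ) (hm₂ : m₂ ≤ mΩ)
    (h : CondIndep m' m₁ m₂ hm' μ) {B : Set Ω} (hB : MeasurableSet[m₂] B) {p H F : Ω → ℝ}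
    (hp : Measurable[m'] p) (hpB : p =ᵐ[μ] μ⟦B | m'⟧) (hp0 : ∀ᵐ ω ∂μ, p ω ≠ 0)
    (hH : Measurable[m₁ ⊔ m'] H)
    (hF : F =ᵐ[μ] fun ω => H ω / p ω * B.indicator (fun _ => (1 : ℝ)) ω)
    (hFint : Integrable F μ) :
    ∫ ω, F ω ∂μ = ∫ ω, H ω ∂μ := by
  rw [integral_congr_ae hF]
  exact integral_div_mul_indicator_of_ae_eq_condExp (sup_le hm₁ hm') (hm₂ B hB)
    (hp.mono le_sup_right le_rfl)
    (hpB.trans (CondIndep.condExp_indicator_sup_ae_eq hm₁ hm₂ h hB).symm) hp0 hH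
    (hFint.congr hF)

end

lemma measurable_pi_lambda₂ {α ι κ β : Type*} {mα : MeasurableSpace α} [MeasurableSpace β]
    {f : ι → κ → α → β} (hf : ∀ i j, Measurable (f i j)) : Measurable fun a i j => f i j a :=
  measurable_pi_lambda _ fun i => measurable_pi_lambda _ fun j => hf i j

lemma measurable_sup_comap_comp_prodMk {Ω E γ β : Type*} [mE : MeasurableSpace E]
    [MeasurableSpace γ] [MeasurableSpace β] {m : MeasurableSpace Ω} {X : Ω → γ}
    (hX : Measurable[m] X) (V : Ω → E) (φ : E × γ → β) (hφ : Measurable φ) :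
    Measurable[mE.comap V ⊔ m] fun ω => φ (V ω, X ω) :=
  hφ.comp (((comap_measurable V).mono le_sup_left le_rfl).prodMk (hX.mono le_sup_right le_rfl))

theorem stmt_15_general
    {Ω : Type*} [mΩ : MeasurableSpace Ω] [StandardBorelSpace Ω]
    (P : Measure Ω) [IsProbabilityMeasure P]
    {k : ℕ} (X : Ω → (Fin k → ℝ))
    (Y : Bool → Bool → Ω → ℝ) (Di Dj : Bool → Bool → Ω → Bool)
    (Zi Zj : Ω → Bool)
    (hYmeas : ∀ d d', Measurable (Y d d'))
    (hDimeas : ∀ z z', Measurable (Di z z'))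
    (hDjmeas : ∀ z z', Measurable (Dj z z'))
    (hZi : Measurable Zi) (hZj : Measurable Zj)
    (m : MeasurableSpace Ω)
    (hm_def : m = MeasurableSpace.comap X inferInstance)
    (hm_le : m ≤ mΩ)
    (hCI : CondIndepFun m hm_le
      (fun ω => ((fun d d' => Y d d' ω),
                 (fun z z' => Di z z' ω),
                 (fun z z' => Dj z z' ω)))
      (fun ω => (Zi ω, Zj ω)) P)
    (hosn : ∀ᵐ ω ∂P,
      Di false false ω = false ∧ Di false true ω = false ∧
      Dj false false ω = false ∧ Dj false true ω = false)
    (p : Bool → Bool → Ω → ℝ)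
    (hpmeas : ∀ z z', Measurable[m] (p z z'))
    (hpcond : ∀ z z', p z z' =ᵐ[P]
      P[(fun ω => Set.indicator ({x | Zi x = z} ∩ {x | Zj x = z'}) (fun _ => (1:ℝ)) ω)|m])
    (hppos : ∀ z z', ∀ᵐ ω ∂P, 0 < p z z' ω)
    (g : ℝ × (Fin k → ℝ) → ℝ) (hg : Measurable g)
    (hint1 : Integrable (fun ω => g ((Y (Di (Zi ω) (Zj ω) ω) (Dj (Zj ω) (Zi ω) ω) ω), X ω) * (1 - bInd (Zi ω)) * (1 - bInd (Zj ω)) / p false false ω) P)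
    (hint2 : Integrable (fun ω => g ((Y (Di (Zi ω) (Zj ω) ω) (Dj (Zj ω) (Zi ω) ω) ω), X ω) * bInd (Di (Zi ω) (Zj ω) ω) * bInd (Zi ω) * (1 - bInd (Zj ω)) / p true false ω) P)
    (hint3 : Integrable (fun ω => g ((Y (Di (Zi ω) (Zj ω) ω) (Dj (Zj ω) (Zi ω) ω) ω), X ω) * bInd (Dj (Zj ω) (Zi ω) ω) * (1 - bInd (Zi ω)) * bInd (Zj ω) / p false true ω) P)
    :
    (∫ ω, g ((Y (Di (Zi ω) (Zj ω) ω) (Dj (Zj ω) (Zi ω) ω) ω), X ω) * (1 - bInd (Zi ω)) * (1 - bInd (Zj ω)) / p false false ω ∂P) = (∫ ω, g (Y false false ω, X ω) ∂P)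
    ∧ (∫ ω, g ((Y (Di (Zi ω) (Zj ω) ω) (Dj (Zj ω) (Zi ω) ω) ω), X ω) * bInd (Di (Zi ω) (Zj ω) ω) * bInd (Zi ω) * (1 - bInd (Zj ω)) / p true false ω ∂P) = (∫ ω, g (Y true false ω, X ω) * Set.indicator ({x | Di true false x = true ∧ Di false true x = false}) (fun _ => (1:ℝ)) ω ∂P)
    ∧ (∫ ω, g ((Y (Di (Zi ω) (Zj ω) ω) (Dj (Zj ω) (Zi ω) ω) ω), X ω) * bInd (Dj (Zj ω) (Zi ω) ω) * (1 - bInd (Zi ω)) * bInd (Zj ω) / p false true ω ∂P) = (∫ ω, g (Y false true ω, X ω) * Set.indicator ({x | Dj true false x = true ∧ Dj false true x = false}) (fun _ => (1:ℝ)) ω ∂P) := by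
  have hV := (measurable_pi_lambda₂ hYmeas).prodMk
    ((measurable_pi_lambda₂ hDimeas).prodMk (measurable_pi_lambda₂ hDjmeas))
  have hXm : Measurable[m] X := hm_def ▸ comap_measurable X
  have hB z z' : MeasurableSet[MeasurableSpace.comap (fun ω => (Zi ω, Zj ω)) inferInstance]
      ({x | Zi x = z} ∩ {x | Zj x = z'}) :=
    ⟨{(z, z')}, measurableSet_singleton _, by ext; simp [Prod.ext_iff]⟩
  have ipw z z' {H F : Ω → ℝ} := CondIndep.integral_eq_of_ae_eq_div_mul_indicator (H := H) (F := F)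
    hV.comap_le (hZi.prodMk hZj).comap_le hCI (hB z z') (hpmeas z z') (hpcond z z')
    ((hppos z z').mono fun _ h => h.ne')
  have hH := measurable_sup_comap_comp_prodMk (β := ℝ) hXm
    fun ω => ((fun d d' => Y d d' ω), (fun z z' => Di z z' ω), (fun z z' => Dj z z' ω))
  refine ⟨ipw false false (hH (fun q => g (q.1.1 false false, q.2)) (by fun_prop)) ?_ hint1,
    ipw true false (hH (fun q => g (q.1.1 true false, q.2) * Set.indicator
        {v | v.2.1 true false = true ∧ v.2.1 false true = false} (fun _ => (1 : ℝ)) q.1)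
      (by measurability)) ?_ hint2,
    ipw false true (hH (fun q => g (q.1.1 false true, q.2) * Set.indicator
        {v | v.2.2 true false = true ∧ v.2.2 false true = false} (fun _ => (1 : ℝ)) q.1)
      (by measurability)) ?_ hint3⟩ <;>
    filter_upwards [hosn] with ω ⟨hi₀₀, hi₀₁, hj₀₀, hj₀₁⟩ <;>
    cases hzi : Zi ω <;> cases hzj : Zj ω <;> cases hdi : Di true false ω <;>
    cases hdj : Dj true false ω <;> simp [bInd, hzi, hzj, hdi, hdj, hi₀₀, hi₀₁, hj₀₀, hj₀₁]

theorem stmt_15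
    {Ω : Type*} [mΩ : MeasurableSpace Ω] [StandardBorelSpace Ω] [Nonempty Ω]
    (P : Measure Ω) [IsProbabilityMeasure P]
    {k : ℕ} (X : Ω → (Fin k → ℝ)) (hX : Measurable X)
    (Y : Bool → Bool → Ω → ℝ) (Di Dj : Bool → Bool → Ω → Bool)
    (Zi Zj : Ω → Bool)
    (hYmeas : ∀ d d', Measurable (Y d d'))
    (hDimeas : ∀ z z', Measurable (Di z z'))
    (hDjmeas : ∀ z z', Measurable (Dj z z'))
    (hZi : Measurable Zi) (hZj : Measurable Zj)
    (m : MeasurableSpace Ω)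
    (hm_def : m = MeasurableSpace.comap X inferInstance)
    (hm_le : m ≤ mΩ)
    (hCI : CondIndepFun m hm_le
      (fun ω => ((fun d d' => Y d d' ω),
                 (fun z z' => Di z z' ω),
                 (fun z z' => Dj z z' ω)))
      (fun ω => (Zi ω, Zj ω)) P)
    (hmono : ∀ᵐ ω ∂P,
      (Di false false ω ≤ Di false true ω ∧ Di false true ω ≤ Di true false ω ∧
        Di true false ω ≤ Di true true ω) ∧
      (Dj false false ω ≤ Dj false true ω ∧ Dj false true ω ≤ Dj true false ω ∧
        Dj true false ω ≤ Dj true true ω))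
    (hosn : ∀ᵐ ω ∂P,
      Di false false ω = false ∧ Di false true ω = false ∧
      Dj false false ω = false ∧ Dj false true ω = false)
    (p : Bool → Bool → Ω → ℝ)
    (hpmeas : ∀ z z', Measurable[m] (p z z'))
    (hpcond : ∀ z z', p z z' =ᵐ[P]
      P[(fun ω => Set.indicator ({x | Zi x = z} ∩ {x | Zj x = z'}) (fun _ => (1:ℝ)) ω)|m])
    (hppos : ∀ z z', ∀ᵐ ω ∂P, 0 < p z z' ω)
    (g : ℝ × (Fin k → ℝ) → ℝ) (hg : Measurable g)
    (hint1 : Integrable (fun ω => g ((Y (Di (Zi ω) (Zj ω) ω) (Dj (Zj ω) (Zi ω) ω) ω), X ω) * (1 - bInd (Zi ω)) * (1 - bInd (Zj ω)) / p false false ω) P)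
    (hint2 : Integrable (fun ω => g ((Y (Di (Zi ω) (Zj ω) ω) (Dj (Zj ω) (Zi ω) ω) ω), X ω) * bInd (Di (Zi ω) (Zj ω) ω) * bInd (Zi ω) * (1 - bInd (Zj ω)) / p true false ω) P)
    (hint3 : Integrable (fun ω => g ((Y (Di (Zi ω) (Zj ω) ω) (Dj (Zj ω) (Zi ω) ω) ω), X ω) * bInd (Dj (Zj ω) (Zi ω) ω) * (1 - bInd (Zi ω)) * bInd (Zj ω) / p false true ω) P)
    (hint4 : Integrable (fun ω => g (Y false false ω, X ω)) P)
    (hint5 : Integrable (fun ω => g (Y true false ω, X ω) * Set.indicator ({x | Di true false x = true ∧ Di false true x = false}) (fun _ => (1:ℝ)) ω) P)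
    (hint6 : Integrable (fun ω => g (Y false true ω, X ω) * Set.indicator ({x | Dj true false x = true ∧ Dj false true x = false}) (fun _ => (1:ℝ)) ω) P)
    :
    (∫ ω, g ((Y (Di (Zi ω) (Zj ω) ω) (Dj (Zj ω) (Zi ω) ω) ω), X ω) * (1 - bInd (Zi ω)) * (1 - bInd (Zj ω)) / p false false ω ∂P) = (∫ ω, g (Y false false ω, X ω) ∂P)
    ∧ (∫ ω, g ((Y (Di (Zi ω) (Zj ω) ω) (Dj (Zj ω) (Zi ω) ω) ω), X ω) * bInd (Di (Zi ω) (Zj ω) ω) * bInd (Zi ω) * (1 - bInd (Zj ω)) / p true false ω ∂P) = (∫ ω, g (Y true false ω, X ω) * Set.indicator ({x | Di true false x = true ∧ Di false true x = false}) (fun _ => (1:ℝ)) ω ∂P)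
    ∧ (∫ ω, g ((Y (Di (Zi ω) (Zj ω) ω) (Dj (Zj ω) (Zi ω) ω) ω), X ω) * bInd (Dj (Zj ω) (Zi ω) ω) * (1 - bInd (Zi ω)) * bInd (Zj ω) / p false true ω ∂P) = (∫ ω, g (Y false true ω, X ω) * Set.indicator ({x | Dj true false x = true ∧ Dj false true x = false}) (fun _ => (1:ℝ)) ω ∂P) :=
  stmt_15_general (mΩ := mΩ) P X Y Di Dj Zi Zj hYmeas hDimeas hDjmeas hZi hZj m hm_def hm_le hCI
    hosn p hpmeas hpcond hppos g hg hint1 hint2 hint3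
end
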